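/- arXiv:1809.00598 — 2 statements merged into one kernel-verified Lean document; each statement's English description precedes it below -/
import Mathlib

section
/- Assume Hypothesis 1, let G be a stationary ergodic random admissible graph and let W̄^β be the deterministic limit free-energy density. Then there exists a constant C>0 such that for all Λ∈ℝ^{n×d} and all β>0: W̄^β(Λ) ≤ C|Λ|^p + C(1 + (1+|log β|)/β). -/
open MeasureTheory Filter Topology Metric Set
open scoped ENNReal NNReal RealInnerProductSpace Pointwise

noncomputable section

namespace Polymer

open Classical

abbrev E (d : ℕ) : Type := EuclideanSpace ℝ (Fin d)
abbrev Fn (n : ℕ) : Type := EuclideanSpace ℝ (Fin n)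

/-- An admissible Euclidean graph with covering radius `R`, separation `r` and
interaction range `C₀`. -/
structure AdmissibleGraph (d : ℕ) (R r C₀ : ℝ) where
  L : Set (E d)
  B : Set (E d × E d)
  countable_L : L.Countable
  cover : ∀ z : E d, ∃ x ∈ L, dist z x ≤ R
  separated : ∀ x ∈ L, ∀ y ∈ L, x ≠ y → r ≤ dist x y
  edge_mem_left : ∀ e ∈ B, Prod.fst e ∈ L
  edge_mem_right : ∀ e ∈ B, Prod.snd e ∈ L
  edge_short : ∀ e ∈ B, dist (Prod.fst e) (Prod.snd e) ≤ C₀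
  connected : ∀ x ∈ L, ∀ y ∈ L, ∃ (m : ℕ) (q : ℕ → E d), q 0 = x ∧ q m = y ∧
    (∀ i < m, (q i, q (i + 1)) ∈ B ∨ (q (i + 1), q i) ∈ B) ∧
    (∀ i ≤ m, ∃ w ∈ segment ℝ x y, dist (q i) w ≤ C₀)

variable {d n : ℕ} {R r C₀ : ℝ}

/-- `O_ε = O/ε`. -/
def scaleSet (ε : ℝ) (O : Set (E d)) : Set (E d) := {x : E d | ε • x ∈ O}

/-- `O_ε^𝓛 = 𝓛 ∩ O_ε`. -/
def latt (G : AdmissibleGraph d R r C₀) (O : Set (E d)) (ε : ℝ) : Set (E d) :=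
  G.L ∩ scaleSet ε O

/-- Edges of the graph with both endpoints in `s`. -/
abbrev edgesIn (G : AdmissibleGraph d R r C₀) (s : Set (E d)) : Type :=
  {q : E d × E d // q ∈ G.B ∧ q.1 ∈ s ∧ q.2 ∈ s}

/-- Integral over configurations on a finite set of sites, with respect to the
product Lebesgue measure (junk value `0` if the set of sites is infinite). -/
noncomputable def piIntegral {ι : Type*} (n : ℕ) (s : Set ι)
    (A : Set (s → Fn n)) (g : (s → Fn n) → ℝ) : ℝ :=
  if h : s.Finite then
    haveI := h.fintype
    ∫ u in A, g u ∂(Measure.pi fun _ : s => (volume : Measure (Fn n)))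
  else 0

/-- The `ℝ≥0∞`-valued version of `piIntegral`. -/
noncomputable def piLIntegral {ι : Type*} (n : ℕ) (s : Set ι)
    (A : Set (s → Fn n)) (g : (s → Fn n) → ℝ) : ℝ≥0∞ :=
  if h : s.Finite then
    haveI := h.fintype
    ∫⁻ u in A, ENNReal.ofReal (g u) ∂(Measure.pi fun _ : s => (volume : Measure (Fn n)))
  else 0

/-- The Hamiltonian `H_ε(O,u)`. -/
noncomputable def Ham (G : AdmissibleGraph d R r C₀) (f : E d → Fn n → ℝ)
    (O : Set (E d)) (ε : ℝ) (u : latt G O ε → Fn n) : ℝ :=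
  ∑' e : edgesIn G (latt G O ε),
    f (e.val.1 - e.val.2) (u ⟨e.val.1, e.prop.2.1⟩ - u ⟨e.val.2, e.prop.2.2⟩)

/-- The class `𝓑_ε(O,φ)` of soft boundary conditions for a continuum boundary datum. -/
def BCset (G : AdmissibleGraph d R r C₀) (O : Set (E d)) (ε : ℝ)
    (φ : E d → Fn n) : Set (latt G O ε → Fn n) :=
  {u | ∀ x : latt G O ε, infDist (x : E d) (frontier (scaleSet ε O)) ≤ C₀ →
        ‖u x - ε⁻¹ • φ (ε • (x : E d))‖ < 1}

/-- Soft boundary conditions with a discrete boundary datum. -/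
def BCdisc (G : AdmissibleGraph d R r C₀) (O : Set (E d)) (ε : ℝ)
    (ψ : latt G O ε → Fn n) : Set (latt G O ε → Fn n) :=
  {u | ∀ x : latt G O ε, infDist (x : E d) (frontier (scaleSet ε O)) ≤ C₀ →
        ‖u x - ψ x‖ < 1}

/-- The (localized) partition function `Z^β_{ε,O}(A)`. -/
noncomputable def Zpart (G : AdmissibleGraph d R r C₀) (f : E d → Fn n → ℝ)
    (O : Set (E d)) (ε β : ℝ) (A : Set (latt G O ε → Fn n)) : ℝ :=
  piIntegral n (latt G O ε) A fun u => Real.exp (-β * Ham G f O ε u)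

/-- `-(β |O_ε|)⁻¹ log Z^β_{ε,O}(A)`. -/
noncomputable def FEneg (G : AdmissibleGraph d R r C₀) (f : E d → Fn n → ℝ)
    (O : Set (E d)) (ε β : ℝ) (A : Set (latt G O ε → Fn n)) : ℝ :=
  -(β * (volume (scaleSet ε O)).toReal)⁻¹ * Real.log (Zpart G f O ε β A)

/-- The Helmholtz free energy `𝓔^β_ε(O,φ)`. -/
noncomputable def freeEnergy (G : AdmissibleGraph d R r C₀) (f : E d → Fn n → ℝ)
    (O : Set (E d)) (φ : E d → Fn n) (ε β : ℝ) : ℝ :=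
  FEneg G f O ε β (BCset G O ε φ)

/-- Hypothesis 1: measurability and two-sided `p`-growth. -/
structure Hypo1 (f : E d → Fn n → ℝ) (C p : ℝ) : Prop where
  hC : 0 < C
  hp : 1 < p
  meas : Measurable (Function.uncurry f)
  nonneg : ∀ z ξ, 0 ≤ f z ξ
  lower : ∀ z ξ, C⁻¹ * ‖ξ‖ ^ p - C ≤ f z ξ
  upper : ∀ z ξ, f z ξ ≤ C * (1 + ‖ξ‖ ^ p)

/-- Hypothesis 2: additionally a local Lipschitz condition. -/
structure Hypo2 (f : E d → Fn n → ℝ) (C p : ℝ) extends Hypo1 f C p : Prop where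
  lipschitz : ∀ z ξ ζ, |f z ξ - f z ζ| ≤ C * ‖ξ - ζ‖ * (1 + ‖ξ‖ ^ (p - 1) + ‖ζ‖ ^ (p - 1))

/-- A bounded Lipschitz domain: open, bounded, nonempty, and near each boundary
point the set is the region above the graph of a Lipschitz function. -/
structure IsLipschitzDomain (D : Set (E d)) : Prop where
  isOpen : IsOpen D
  bounded : Bornology.IsBounded D
  nonempty : D.Nonempty
  lipschitzGraph : ∀ x ∈ frontier D, ∃ ρ > (0:ℝ), ∃ v : E d, ‖v‖ = 1 ∧
    ∃ (M : ℝ≥0) (ψ : E d → ℝ), LipschitzWith M ψ ∧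
      ∀ y ∈ Metric.ball x ρ, (y ∈ D ↔ ψ (y - ⟪y, v⟫ • v) < ⟪y, v⟫)

/-- The open unit cube `Q = (0,1)^d`. -/
def unitCube (d : ℕ) : Set (E d) := {x : E d | ∀ i, x i ∈ Set.Ioo (0:ℝ) 1}

/-- Quasiconvexity of a Borel function on matrices (tested on the unit cube). -/
def IsQuasiconvex (W : (E d →L[ℝ] Fn n) → ℝ) : Prop :=
  ∀ (Λ : E d →L[ℝ] Fn n) (φ : E d → Fn n), ContDiff ℝ (⊤ : ℕ∞) φ → HasCompactSupport φ →
    tsupport φ ⊆ unitCube d → W Λ ≤ ∫ x in unitCube d, W (Λ + fderiv ℝ φ x)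

/-- The lattice vector `z ∈ ℤ^d` as a point of `ℝ^d`. -/
noncomputable def intVec (d : ℕ) (z : Fin d → ℤ) : E d :=
  (EuclideanSpace.equiv (Fin d) ℝ).symm fun i => (z i : ℝ)

/-- The Voronoi cell `𝒞(x)` of a vertex. -/
def voronoiCell (G : AdmissibleGraph d R r C₀) (x : E d) : Set (E d) :=
  {z : E d | ∀ y ∈ G.L, dist z x ≤ dist z y}

/-- `v_ε(x)`: the average of `v` over the scaled Voronoi cell `ε𝒞(x)`. -/
noncomputable def vavg (G : AdmissibleGraph d R r C₀) (v : E d → Fn n) (ε : ℝ)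
    (x : E d) : Fn n :=
  (volume (ε • voronoiCell G x)).toReal⁻¹ • ∫ z in ε • voronoiCell G x, v z

/-- The neighbourhood `𝓝_p(v,O,ε,κ)`. -/
def Nnbhd (G : AdmissibleGraph d R r C₀) (O : Set (E d)) (ε κ p : ℝ)
    (v : E d → Fn n) : Set (latt G O ε → Fn n) :=
  {u | (∑' x : latt G O ε, ε ^ d * ‖vavg G v ε (x : E d) - ε • u x‖ ^ p)
        < κ ^ p * (volume O).toReal ^ (1 + p / (d : ℝ))}

/-- `𝓕⁻_κ(O,v)`. -/
noncomputable def FminusK (G : AdmissibleGraph d R r C₀) (f : E d → Fn n → ℝ)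
    (O : Set (E d)) (β κ p : ℝ) (v : E d → Fn n) : EReal :=
  Filter.liminf (fun ε : ℝ => ((FEneg G f O ε β (Nnbhd G O ε κ p v) : ℝ) : EReal))
    (𝓝[>] (0:ℝ))

/-- `𝓕⁺_κ(O,v)`. -/
noncomputable def FplusK (G : AdmissibleGraph d R r C₀) (f : E d → Fn n → ℝ)
    (O : Set (E d)) (β κ p : ℝ) (v : E d → Fn n) : EReal :=
  Filter.limsup (fun ε : ℝ => ((FEneg G f O ε β (Nnbhd G O ε κ p v) : ℝ) : EReal))
    (𝓝[>] (0:ℝ))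

/-- `𝓕⁻(O,v) = lim_{κ→0} 𝓕⁻_κ(O,v) = sup_{κ>0} 𝓕⁻_κ(O,v)`. -/
noncomputable def Fminus (G : AdmissibleGraph d R r C₀) (f : E d → Fn n → ℝ)
    (O : Set (E d)) (β p : ℝ) (v : E d → Fn n) : EReal :=
  ⨆ κ : {k : ℝ // 0 < k}, FminusK G f O β κ.1 p v

/-- `𝓕⁺(O,v) = lim_{κ→0} 𝓕⁺_κ(O,v) = sup_{κ>0} 𝓕⁺_κ(O,v)`. -/
noncomputable def Fplus (G : AdmissibleGraph d R r C₀) (f : E d → Fn n → ℝ)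
    (O : Set (E d)) (β p : ℝ) (v : E d → Fn n) : EReal :=
  ⨆ κ : {k : ℝ // 0 < k}, FplusK G f O β κ.1 p v

/-- The set `𝒮_M(O,ε)` of configurations with energy at most `M |O_ε^𝓛|`. -/
def SMset (G : AdmissibleGraph d R r C₀) (f : E d → Fn n → ℝ)
    (O : Set (E d)) (ε M : ℝ) : Set (latt G O ε → Fn n) :=
  {u | Ham G f O ε u ≤ M * (Nat.card ↥(latt G O ε) : ℝ)}

/-- `‖u‖_{ℓ^p_ε(O)}^p`. -/
noncomputable def lpNormP (G : AdmissibleGraph d R r C₀) (O : Set (E d)) (ε p : ℝ)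
    (u : latt G O ε → Fn n) : ℝ :=
  ∑' x : latt G O ε, ‖u x‖ ^ p

/-- `‖∇_𝔹 u‖_{ℓ^p_ε(O)}^p`. -/
noncomputable def gradLpNormP (G : AdmissibleGraph d R r C₀) (O : Set (E d)) (ε p : ℝ)
    (u : latt G O ε → Fn n) : ℝ :=
  ∑' e : edgesIn G (latt G O ε),
    ‖u ⟨e.val.1, e.prop.2.1⟩ - u ⟨e.val.2, e.prop.2.2⟩‖ ^ p

/-- Two points are connected by a chain of edges of `G` inside `s`. -/
def chainRel (G : AdmissibleGraph d R r C₀) (s : Set (E d)) (x y : E d) : Prop :=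
  ∃ (m : ℕ) (q : ℕ → E d), q 0 = x ∧ q m = y ∧ (∀ i ≤ m, q i ∈ s) ∧
    ∀ i < m, (q i, q (i + 1)) ∈ G.B ∨ (q (i + 1), q i) ∈ G.B

/-- The number of connected components of the graph induced on `s`. -/
noncomputable def numComponents (G : AdmissibleGraph d R r C₀) (s : Set (E d)) : ℕ :=
  Nat.card (Quot fun a b : s => chainRel G s (a : E d) (b : E d))

/-- The honest extended-real logarithm of an `ℝ≥0∞` number. -/
noncomputable def elog (x : ℝ≥0∞) : EReal :=
  if x = 0 then ⊥ else if x = ⊤ then ⊤ else ((Real.log x.toReal : ℝ) : EReal)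

/-- The rescaled piecewise constant (on Voronoi cells) representative
`(Π_ε u)(z) = ε u(z/ε)` of a discrete configuration. -/
noncomputable def voronoiRep (G : AdmissibleGraph d R r C₀) (O : Set (E d)) (ε : ℝ)
    (u : latt G O ε → Fn n) : E d → Fn n := fun z =>
  if h : ∃ x : latt G O ε, ε⁻¹ • z ∈ voronoiCell G (x : E d) then ε • u h.choose else 0

/-- The value of the Gibbs measure `μ^β_{ε,D,φ}` on a set `V ⊆ L^p(D,ℝⁿ)`. -/
noncomputable def gibbsVal (G : AdmissibleGraph d R r C₀) (f : E d → Fn n → ℝ)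
    (D : Set (E d)) (φ : E d → Fn n) (ε β p : ℝ)
    (V : Set (Lp (Fn n) (ENNReal.ofReal p) (volume.restrict D))) : ℝ≥0∞ :=
  piLIntegral n (latt G D ε)
      {u | u ∈ BCset G D ε φ ∧
        ∃ h : MemLp (voronoiRep G D ε u) (ENNReal.ofReal p) (volume.restrict D),
          MemLp.toLp _ h ∈ V}
      (fun u => Real.exp (-β * Ham G f D ε u)) /
    piLIntegral n (latt G D ε) (BCset G D ε φ) (fun u => Real.exp (-β * Ham G f D ε u))

/-- `g` is the weak differential of `v` on `D`. -/
def IsWeakDeriv (D : Set (E d)) (v : E d → Fn n) (g : E d → (E d →L[ℝ] Fn n)) : Prop :=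
  ∀ φ : E d → ℝ, ContDiff ℝ (⊤ : ℕ∞) φ → HasCompactSupport φ → tsupport φ ⊆ D →
    ∀ e : E d, (∫ x in D, fderiv ℝ φ x e • v x) = -∫ x in D, φ x • g x e

/-- `v ∈ W^{1,p}(D,ℝⁿ)` with weak differential `g`. -/
def MemW1p (p : ℝ) (D : Set (E d)) (v : E d → Fn n) (g : E d → (E d →L[ℝ] Fn n)) : Prop :=
  MemLp v (ENNReal.ofReal p) (volume.restrict D) ∧ IsWeakDeriv D v g ∧
    MemLp g (ENNReal.ofReal p) (volume.restrict D)

/-- `v ∈ W₀^{1,p}(D,ℝⁿ)` (with weak differential `g`): `v` lies in the `W^{1,p}`-closure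
of smooth compactly supported functions on `D`. -/
def MemW1p0 (p : ℝ) (D : Set (E d)) (v : E d → Fn n) (g : E d → (E d →L[ℝ] Fn n)) : Prop :=
  MemW1p p D v g ∧ ∃ φk : ℕ → E d → Fn n,
    (∀ k, ContDiff ℝ (⊤ : ℕ∞) (φk k) ∧ HasCompactSupport (φk k) ∧ tsupport (φk k) ⊆ D) ∧
    Filter.Tendsto (fun k =>
        eLpNorm (fun x => v x - φk k x) (ENNReal.ofReal p) (volume.restrict D) +
        eLpNorm (fun x => g x - fderiv ℝ (φk k) x) (ENNReal.ofReal p) (volume.restrict D))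
      atTop (𝓝 0)

/-- `v ∈ φ + W₀^{1,p}(D,ℝⁿ)` with weak differential `g`. -/
def MemAffW1p0 (p : ℝ) (D : Set (E d)) (φ v : E d → Fn n)
    (g : E d → (E d →L[ℝ] Fn n)) : Prop :=
  ∃ gφ, MemW1p p D φ gφ ∧ MemW1p0 p D (fun x => v x - φ x) (fun x => g x - gφ x)

/-- `inf { ⨍_D W(∇u) : u ∈ φ + W₀^{1,p}(D,ℝⁿ) }`. -/
noncomputable def minEnergy (W : (E d →L[ℝ] Fn n) → ℝ) (p : ℝ) (D : Set (E d))
    (φ : E d → Fn n) : ℝ :=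
  sInf {t : ℝ | ∃ v g, MemAffW1p0 p D φ v g ∧
      t = (volume D).toReal⁻¹ * ∫ x in D, W (g x)}

/-- The rate functional `𝓘_{D,φ}` built from the energy density `W`:
`u ↦ ⨍_D W(∇u) - inf{⨍_D W(∇v)}` on `φ + W₀^{1,p}(D,ℝⁿ)`, `+∞` elsewhere. -/
noncomputable def rateFun (W : (E d →L[ℝ] Fn n) → ℝ) (p : ℝ) (D : Set (E d))
    (φ : E d → Fn n) (u : Lp (Fn n) (ENNReal.ofReal p) (volume.restrict D)) : ℝ≥0∞ :=
  sInf {t : ℝ≥0∞ | ∃ v g, MemAffW1p0 p D φ v g ∧ (⇑u) =ᵐ[volume.restrict D] v ∧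
      t = ENNReal.ofReal
        ((volume D).toReal⁻¹ * (∫ x in D, W (g x)) - minEnergy W p D φ)}

/-- `|O_ε|⁻¹ inf { H_ε(O,u) : u ∈ 𝓑_ε(O,φ) }`. -/
noncomputable def minHam (G : AdmissibleGraph d R r C₀) (f : E d → Fn n → ℝ)
    (O : Set (E d)) (ε : ℝ) (φ : E d → Fn n) : ℝ :=
  (volume (scaleSet ε O)).toReal⁻¹ * sInf ((fun u => Ham G f O ε u) '' BCset G O ε φ)

/-- The inner boundary tube `O^δ = {x ∈ O : dist(x,∂O) < 2δ}`. -/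
def tubeIn (O : Set (E d)) (δ : ℝ) : Set (E d) :=
  {y : E d | y ∈ O ∧ infDist y (frontier O) < 2 * δ}

/-- The constant `C₁ = max(vol(B₁(0) ⊆ ℝⁿ), ∫_{ℝⁿ} e^{-|ζ|^p} dζ)`. -/
noncomputable def C1const (n : ℕ) (p : ℝ) : ℝ :=
  max ((volume (Metric.ball (0 : Fn n) 1)).toReal) (∫ ζ : Fn n, Real.exp (-‖ζ‖ ^ p))

/-- The tightness constant `C_β`. -/
noncomputable def Cbeta (C β : ℝ) : ℝ := if 1 / 2 ≤ β then C else -C * Real.log β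


section Aux

variable {d n : ℕ} {R r C₀ : ℝ}

lemma sqrt_half_lip {a b : ℝ} (ha0 : 0 ≤ a) (ha : a ≤ 1/2) (hb0 : 0 ≤ b) (hb : b ≤ 1/2) :
    |Real.sqrt (1 - a^2) - Real.sqrt (1 - b^2)| ≤ |a - b| := by
  wlog hab : b ≤ a generalizing a b
  · rw [abs_sub_comm, abs_sub_comm a b]
    exact this hb0 hb ha0 ha (le_of_not_ge hab)
  set u := Real.sqrt (1 - a^2) with hu
  set v := Real.sqrt (1 - b^2) with hv
  have hu0 : 0 ≤ u := Real.sqrt_nonneg _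
  have hv0 : 0 ≤ v := Real.sqrt_nonneg _
  have hu2 : u^2 = 1 - a^2 := Real.sq_sqrt (by nlinarith)
  have hv2 : v^2 = 1 - b^2 := Real.sq_sqrt (by nlinarith)
  have huv : u ≤ v := Real.sqrt_le_sqrt (by nlinarith)
  have hu12 : 1/2 ≤ u := by nlinarith
  have hv12 : 1/2 ≤ v := by nlinarith
  rw [abs_of_nonpos (by linarith), abs_of_nonneg (by linarith)]
  nlinarith [mul_le_mul_of_nonneg_left (add_le_add hu12 hv12) (sub_nonneg.2 hab)]

lemma min_lip (a b c : ℝ) : |min a c - min b c| ≤ |a - b| := by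
  rcases le_total a c with h1 | h1 <;> rcases le_total b c with h2 | h2
  · rw [min_eq_left h1, min_eq_left h2]
  · rw [min_eq_left h1, min_eq_right h2, abs_le]
    constructor <;> nlinarith [le_abs_self (a-b), neg_abs_le (a-b)]
  · rw [min_eq_right h1, min_eq_left h2, abs_le]
    constructor <;> nlinarith [le_abs_self (a-b), neg_abs_le (a-b)]
  · rw [min_eq_right h1, min_eq_right h2]
    simp [abs_nonneg]

lemma ball_isLipschitzDomain : IsLipschitzDomain (ball (0 : E d) 1) := by
  refine ⟨isOpen_ball, isBounded_ball, ⟨0, mem_ball_self one_pos⟩, ?_⟩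
  intro x hx
  rw [frontier_ball 0 one_ne_zero] at hx
  have hxn : ‖x‖ = 1 := by simpa using hx
  refine ⟨1/2, by norm_num, -x, by simp [hxn], 1,
    fun w => -Real.sqrt (1 - (min ‖w‖ (1/2))^2), ?_, ?_⟩
  · refine LipschitzWith.of_dist_le_mul fun w w' => ?_
    rw [Real.dist_eq]
    push_cast
    rw [one_mul]
    have h1 : |(-Real.sqrt (1 - (min ‖w‖ (1/2))^2)) - (-Real.sqrt (1 - (min ‖w'‖ (1/2))^2))|
        = |Real.sqrt (1 - (min ‖w‖ (1/2))^2) - Real.sqrt (1 - (min ‖w'‖ (1/2))^2)| := by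
      rw [← abs_neg]; ring_nf
    rw [h1]
    calc |Real.sqrt (1 - (min ‖w‖ (1/2))^2) - Real.sqrt (1 - (min ‖w'‖ (1/2))^2)|
        ≤ |min ‖w‖ (1/2) - min ‖w'‖ (1/2)| :=
          sqrt_half_lip (le_min (norm_nonneg _) (by norm_num)) (min_le_right _ _)
            (le_min (norm_nonneg _) (by norm_num)) (min_le_right _ _)
      _ ≤ |‖w‖ - ‖w'‖| := min_lip _ _ _
      _ ≤ ‖w - w'‖ := abs_norm_sub_norm_le _ _
      _ = dist w w' := (dist_eq_norm _ _).symm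
  · intro y hy
    set t : ℝ := ⟪y, x⟫ with htdef
    have hvy : ⟪y, -x⟫ = -t := by rw [inner_neg_right]
    set w : E d := y - t • x with hw
    have hwy : y - (-t) • -x = w := by rw [hw]; module
    have hxx : ⟪x, x⟫ = (1:ℝ) := by
      rw [real_inner_self_eq_norm_sq, hxn]; norm_num
    have hwx : ⟪w, x⟫ = 0 := by
      rw [hw, inner_sub_left, real_inner_smul_left, hxx]; simp [htdef]
    have hy2 : ‖y‖^2 = ‖w‖^2 + t^2 := by
      have : y = w + t • x := by rw [hw]; abel
      rw [this, norm_add_sq_real, real_inner_smul_right, hwx, norm_smul, hxn]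
      simp [mul_pow, sq_abs]
    have hyx2 : ‖y - x‖^2 = ‖w‖^2 + (t-1)^2 := by
      have : y - x = w + (t-1) • x := by rw [hw]; module
      rw [this, norm_add_sq_real, real_inner_smul_right, hwx, norm_smul, hxn]
      simp [mul_pow, sq_abs]
      try ring
    have hyx : ‖y - x‖ < 1/2 := by rwa [mem_ball, dist_eq_norm] at hy
    have hyx2' : ‖w‖^2 + (t-1)^2 < 1/4 := by
      rw [← hyx2]; nlinarith [norm_nonneg (y - x)]
    have hwlt : ‖w‖ < 1/2 := by nlinarith [norm_nonneg w, sq_nonneg (t-1)]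
    have htgt : 1/2 < t := by nlinarith [sq_nonneg ‖w‖]
    have hmin : min ‖w‖ (1/2) = ‖w‖ := min_eq_left hwlt.le
    simp only [hvy, hwy]
    rw [hmin, mem_ball_zero_iff, neg_lt_neg_iff]
    have harg : (0:ℝ) ≤ 1 - ‖w‖^2 := by nlinarith
    clear_value t w
    clear hvy hwy hwx hyx2 hyx hyx2' hw htdef hxx hy
    constructor
    · intro hy1
      have : t^2 < 1 - ‖w‖^2 := by nlinarith [norm_nonneg y]
      have h2 : t < Real.sqrt (1 - ‖w‖^2) := by
        have := Real.sqrt_lt_sqrt (sq_nonneg t) this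
        rwa [Real.sqrt_sq (by linarith)] at this
      linarith
    · intro hlt
      have hs2 : (Real.sqrt (1 - ‖w‖^2))^2 = 1 - ‖w‖^2 := Real.sq_sqrt harg
      have ht2 : t^2 < 1 - ‖w‖^2 := by nlinarith [Real.sqrt_nonneg (1 - ‖w‖^2)]
      have : ‖y‖^2 < 1 := by nlinarith
      nlinarith [norm_nonneg y]

lemma pack {d : ℕ} {r : ℝ} (hr : 0 < r) (S : Set (E d))
    (hsep : S.Pairwise fun x y => r ≤ dist x y) (c : E d) (ρ : ℝ) (hρ : 0 ≤ ρ)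
    (hsub : S ⊆ closedBall c ρ) :
    S.Finite ∧ (S.ncard : ℝ) * ((r/3) ^ d * (volume (ball (0:E d) 1)).toReal)
      ≤ (ρ + r/3) ^ d * (volume (ball (0:E d) 1)).toReal := by
  have hr3 : (0:ℝ) ≤ r/3 := by linarith
  have hvol : ∀ x : E d, volume (closedBall x (r/3))
      = ENNReal.ofReal ((r/3) ^ d) * volume (ball (0 : E d) 1) := fun x => by
    rw [Measure.addHaar_closedBall _ _ hr3, finrank_euclideanSpace_fin]
  have hdisj : S.PairwiseDisjoint fun x => closedBall x (r/3) := fun x hx y hy hxy => by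
    exact closedBall_disjoint_closedBall (by have := hsep hx hy hxy; linarith)
  have hcap : ∀ x ∈ S, closedBall x (r/3) ⊆ closedBall c (ρ + r/3) := by
    intro x hx z hz
    have hxc := hsub hx
    simp only [mem_closedBall] at *
    calc dist z c ≤ dist z x + dist x c := dist_triangle _ _ _
      _ ≤ ρ + r/3 := by linarith
  have hballpos : (0:ℝ≥0∞) < volume (ball (0:E d) 1) := measure_ball_pos _ _ one_pos
  have hballne : volume (ball (0:E d) 1) ≠ ⊤ := measure_ball_lt_top.ne
  have hfin : S.Finite := by
    by_contra hinf
    have hinf' : S.Infinite := hinf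
    set e := hinf'.natEmbedding
    have hU : volume (⋃ i : ℕ, closedBall ((e i : E d)) (r/3))
        = ∑' _ : ℕ, (ENNReal.ofReal ((r/3) ^ d) * volume (ball (0 : E d) 1)) := by
      rw [measure_iUnion]
      · simp [hvol]
      · intro i j hij
        exact hdisj (e i).2 (e j).2 (fun h => hij (e.injective (Subtype.ext h)))
      · intro i; exact measurableSet_closedBall
    have htop : volume (⋃ i : ℕ, closedBall ((e i : E d)) (r/3)) = ⊤ := by
      rw [hU, ENNReal.tsum_const_eq_top_of_ne_zero]
      refine mul_ne_zero ?_ (measure_ball_pos _ _ one_pos).ne'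
      simp only [ne_eq, ENNReal.ofReal_eq_zero, not_le]
      positivity
    have hle : volume (⋃ i : ℕ, closedBall ((e i : E d)) (r/3)) ≤ volume (closedBall c (ρ + r/3)) := by
      apply measure_mono
      exact Set.iUnion_subset fun i => hcap _ (e i).2
    rw [htop] at hle
    exact (measure_closedBall_lt_top.ne) (top_le_iff.mp hle)
  refine ⟨hfin, ?_⟩
  classical
  have hcard : S.ncard = hfin.toFinset.card := by
    rw [← Set.ncard_coe_finset, hfin.coe_toFinset]
  have hmeas : volume (⋃ x ∈ hfin.toFinset, closedBall x (r/3))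
      = ∑ x ∈ hfin.toFinset, volume (closedBall x (r/3)) := by
    apply measure_biUnion_finset
    · intro x hx y hy hxy
      exact hdisj (hfin.mem_toFinset.1 hx) (hfin.mem_toFinset.1 hy) hxy
    · intro x _; exact measurableSet_closedBall
  have hle : volume (⋃ x ∈ hfin.toFinset, closedBall x (r/3))
      ≤ volume (closedBall c (ρ + r/3)) := by
    apply measure_mono
    intro z hz
    simp only [Set.mem_iUnion] at hz
    obtain ⟨x, hx, hzx⟩ := hz
    exact hcap x (hfin.mem_toFinset.1 hx) hzx
  rw [hmeas] at hle
  simp only [hvol, Finset.sum_const, nsmul_eq_mul] at hle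
  rw [Measure.addHaar_closedBall _ _ (by linarith : (0:ℝ) ≤ ρ + r/3),
    finrank_euclideanSpace_fin] at hle
  have := ENNReal.toReal_mono (by finiteness) hle
  rw [ENNReal.toReal_mul, ENNReal.toReal_mul, ENNReal.toReal_mul, ENNReal.toReal_ofReal (by positivity),
    ENNReal.toReal_ofReal (by positivity)] at this
  rw [ENNReal.toReal_natCast] at this
  rw [hcard]
  linarith [this]

/-- Volume-packing constant controlling vertex density. -/
noncomputable def Kconst (d : ℕ) (r : ℝ) : ℝ :=
  4 ^ d / ((r/3) ^ d * (volume (ball (0:E d) 1)).toReal)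

/-- Volume-packing constant controlling vertex degrees. -/
noncomputable def Dconst (d : ℕ) (r C₀ : ℝ) : ℝ := (C₀ + r/3) ^ d / (r/3) ^ d

lemma Kconst_nonneg (d : ℕ) {r : ℝ} (hr : 0 < r) : 0 ≤ Kconst d r := by
  have : (0:ℝ≥0∞) < volume (ball (0:E d) 1) := measure_ball_pos _ _ one_pos
  have h2 : (0:ℝ) < (volume (ball (0:E d) 1)).toReal :=
    ENNReal.toReal_pos this.ne' measure_ball_lt_top.ne
  unfold Kconst; positivity

lemma Dconst_nonneg (d : ℕ) {r C₀ : ℝ} (hr : 0 < r) (hC₀ : 0 < C₀) : 0 ≤ Dconst d r C₀ := by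
  unfold Dconst; positivity

lemma Zpart_eq (G : AdmissibleGraph d R r C₀) (f : E d → Fn n → ℝ)
    (O : Set (E d)) (ε β : ℝ) (hfin : (latt G O ε).Finite)
    [inst : Fintype ↥(latt G O ε)] (A' : Set (↥(latt G O ε) → Fn n)) :
    Zpart G f O ε β A' = ∫ u in A', Real.exp (-β * Ham G f O ε u)
      ∂(Measure.pi fun _ : ↥(latt G O ε) => (volume : Measure (Fn n))) := by
  rw [Zpart, piIntegral, dif_pos hfin]
  rw [Subsingleton.elim hfin.fintype inst]

set_option maxHeartbeats 2000000 in
lemma freeEnergy_ball_le (hr : 0 < r) (hC₀ : 0 < C₀)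
    (f : E d → Fn n → ℝ) (C p : ℝ) (hf : Hypo1 f C p)
    (G : AdmissibleGraph d R r C₀) (Λ : E d →L[ℝ] Fn n) (β ε : ℝ)
    (hβ : 0 < β) (hε : 0 < ε) (hε2 : ε < 2 / r) :
    freeEnergy G f (ball (0:E d) 1) (⇑Λ) ε β ≤
      (C * (1 + (1 + C₀ * ‖Λ‖) ^ p)) * (Dconst d r C₀ * Kconst d r) +
      (Kconst d r * |Real.log (volume (closedBall (0:Fn n) (1/2))).toReal|) / β := by
  classical
  have hu1 : (0:ℝ) < (volume (ball (0:E d) 1)).toReal :=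
    ENNReal.toReal_pos (measure_ball_pos _ _ one_pos).ne' measure_ball_lt_top.ne
  -- identification of the scaled domain
  have hscale : scaleSet ε (ball (0:E d) 1) = ball (0:E d) (1/ε) := by
    ext x
    simp only [scaleSet, Set.mem_setOf_eq, mem_ball_zero_iff, norm_smul, Real.norm_eq_abs,
      abs_of_pos hε]
    rw [lt_div_iff₀ hε, mul_comm]
  set S : Set (E d) := latt G (ball (0:E d) 1) ε with hSdef
  have hSsub : S ⊆ closedBall (0:E d) (1/ε) := by
    intro x hx
    have h1 : x ∈ ball (0:E d) (1/ε) := hscale ▸ hx.2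
    exact ball_subset_closedBall h1
  have hSL : S ⊆ G.L := fun x hx => hx.1
  have hSsep : S.Pairwise fun x y => r ≤ dist x y :=
    fun x hx y hy hxy => G.separated x (hSL hx) y (hSL hy) hxy
  have hεinv : (0:ℝ) ≤ 1/ε := by positivity
  obtain ⟨hfin, hcount⟩ := pack hr S hSsep 0 (1/ε) hεinv hSsub
  haveI hFS : Fintype ↥S := hfin.fintype
  -- unfold the free energy
  simp only [freeEnergy, FEneg]
  rw [Zpart_eq G f (ball (0:E d) 1) ε β hfin (inst := hFS)]
  show -(β * (volume (scaleSet ε (ball (0:E d) 1))).toReal)⁻¹ *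
      Real.log (∫ u in BCset G (ball (0:E d) 1) ε ⇑Λ,
        Real.exp (-β * Ham G f (ball (0:E d) 1) ε u)
          ∂(Measure.pi (fun _ : ↥S => (volume : Measure (Fn n))))) ≤
    C * (1 + (1 + C₀ * ‖Λ‖) ^ p) * (Dconst d r C₀ * Kconst d r) +
      Kconst d r * |Real.log (volume (closedBall (0:Fn n) (1/2))).toReal| / β
  set u1 : ℝ := (volume (ball (0:E d) 1)).toReal with hu1def
  set N : ℕ := S.ncard with hNdef
  set V : ℝ := (volume (scaleSet ε (ball (0:E d) 1))).toReal with hVdef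
  have hV : V = (volume (ball (0:E d) (1/ε))).toReal := by rw [hVdef, hscale]
  have hVlow : (1/(2*ε)) ^ d * u1 ≤ V := by
    have hsub2 : closedBall (0:E d) (1/(2*ε)) ⊆ ball (0:E d) (1/ε) := by
      intro z hz
      simp only [mem_closedBall, dist_zero_right] at hz
      simp only [mem_ball_zero_iff]
      have h12 : 1/(2*ε) < 1/ε := by
        rw [div_lt_div_iff₀ (by positivity) hε]; linarith
      linarith
    have hmono : volume (closedBall (0:E d) (1/(2*ε))) ≤ volume (ball (0:E d) (1/ε)) :=
      measure_mono hsub2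
    have hm := ENNReal.toReal_mono
      (measure_ball_lt_top (μ := (volume : Measure (E d))) (x := (0:E d)) (r := 1/ε)).ne hmono
    rw [Measure.addHaar_closedBall _ _ (by positivity), finrank_euclideanSpace_fin,
      ENNReal.toReal_mul, ENNReal.toReal_ofReal (by positivity)] at hm
    rw [hV]
    exact hm
  have hVpos : 0 < V := lt_of_lt_of_le (by positivity) hVlow
  -- vertex count bound
  have hr3 : (0:ℝ) < (r/3) ^ d := by positivity
  have hN : (N:ℝ) ≤ Kconst d r * V := by
    have hεr : ε * r < 2 := (lt_div_iff₀ hr).1 hε2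
    have hre : r / 3 ≤ 1 / ε := by
      rw [div_le_div_iff₀ (by norm_num) hε]; nlinarith
    have htwo : (2:ℝ)/ε = 1/ε + 1/ε := by ring
    have h1 : ((1:ℝ)/ε + r/3) ^ d ≤ (2/ε) ^ d := by
      apply pow_le_pow_left₀ (by positivity)
      rw [htwo]; linarith
    have h2 : ((2:ℝ)/ε) ^ d = 4 ^ d * (1/(2*ε)) ^ d := by
      rw [← mul_pow]
      congr 1
      field_simp
      ring
    have h3 : (N:ℝ) * ((r/3) ^ d * u1) ≤ 4 ^ d * V :=
      calc (N:ℝ) * ((r/3) ^ d * u1) ≤ (1/ε + r/3) ^ d * u1 := hcount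
        _ ≤ (2/ε) ^ d * u1 := mul_le_mul_of_nonneg_right h1 hu1.le
        _ = 4 ^ d * ((1/(2*ε)) ^ d * u1) := by rw [h2]; ring
        _ ≤ 4 ^ d * V := mul_le_mul_of_nonneg_left hVlow (by positivity)
    rw [Kconst, ← hu1def, div_mul_eq_mul_div, le_div_iff₀ (by positivity)]
    exact h3
  -- edge count bound
  set T : Set (E d × E d) := {q | q ∈ G.B ∧ q.1 ∈ S ∧ q.2 ∈ S} with hTdef
  have hTfin : T.Finite := by
    apply (hfin.prod hfin).subset
    intro q hq
    exact ⟨hq.2.1, hq.2.2⟩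
  set SF : Finset (E d) := hfin.toFinset with hSFdef
  set nbF : E d → Finset (E d) := fun x => SF.filter (fun y => dist x y ≤ C₀) with hnbFdef
  have hnb : ∀ x, ((nbF x).card : ℝ) * ((r/3) ^ d * u1) ≤ (C₀ + r/3) ^ d * u1 := by
    intro x
    have hsep' : (↑(nbF x) : Set (E d)).Pairwise fun a b => r ≤ dist a b := by
      intro a ha b hb hab
      have ha' : a ∈ S := hfin.mem_toFinset.1 (Finset.mem_of_mem_filter a ha)
      have hb' : b ∈ S := hfin.mem_toFinset.1 (Finset.mem_of_mem_filter b hb)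
      exact G.separated a (hSL ha') b (hSL hb') hab
    have hsub' : (↑(nbF x) : Set (E d)) ⊆ closedBall x C₀ := by
      intro a ha
      have := (Finset.mem_filter.1 ha).2
      simpa [mem_closedBall, dist_comm] using this
    obtain ⟨-, hc⟩ := pack hr (↑(nbF x)) hsep' x C₀ hC₀.le hsub'
    rwa [Set.ncard_coe_finset] at hc
  have hnb' : ∀ x, ((nbF x).card : ℝ) ≤ Dconst d r C₀ := by
    intro x
    rw [Dconst, le_div_iff₀ hr3]
    have h4 : ((nbF x).card : ℝ) * (r/3) ^ d * u1 ≤ (C₀ + r/3) ^ d * u1 := by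
      calc ((nbF x).card : ℝ) * (r/3) ^ d * u1
          = ((nbF x).card : ℝ) * ((r/3) ^ d * u1) := by ring
        _ ≤ (C₀ + r/3) ^ d * u1 := hnb x
    exact le_of_mul_le_mul_right h4 hu1
  have hNe : (T.ncard : ℝ) ≤ Dconst d r C₀ * N := by
    have hsub2 : T ⊆ ↑(SF.biUnion fun x => {x} ×ˢ nbF x) := by
      intro q hq
      have h1 : q.1 ∈ SF := hfin.mem_toFinset.2 hq.2.1
      have h2 : q.2 ∈ nbF q.1 :=
        Finset.mem_filter.2 ⟨hfin.mem_toFinset.2 hq.2.2, G.edge_short q hq.1⟩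
      exact Finset.mem_coe.2 (Finset.mem_biUnion.2 ⟨q.1, h1,
        Finset.mem_product.2 ⟨Finset.mem_singleton_self _, h2⟩⟩)
    have hc1 : T.ncard ≤ (SF.biUnion fun x => {x} ×ˢ nbF x).card := by
      rw [← Set.ncard_coe_finset]
      exact Set.ncard_le_ncard hsub2 (Finset.finite_toSet _)
    have hc2 : (SF.biUnion fun x => {x} ×ˢ nbF x).card ≤ ∑ x ∈ SF, (nbF x).card := by
      refine Finset.card_biUnion_le.trans ?_
      refine Finset.sum_le_sum fun x _ => ?_
      rw [Finset.card_product, Finset.card_singleton, one_mul]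
    have hSFcard : SF.card = N := by
      rw [hNdef, Set.ncard_eq_toFinset_card' S]
      congr 1
      ext x
      simp [hSFdef]
    calc (T.ncard : ℝ) ≤ ((∑ x ∈ SF, (nbF x).card : ℕ) : ℝ) := by
          exact_mod_cast hc1.trans hc2
      _ = ∑ x ∈ SF, ((nbF x).card : ℝ) := by push_cast; rfl
      _ ≤ ∑ _x ∈ SF, Dconst d r C₀ := Finset.sum_le_sum fun x _ => hnb' x
      _ = SF.card * Dconst d r C₀ := by rw [Finset.sum_const, nsmul_eq_mul]
      _ = Dconst d r C₀ * N := by rw [hSFcard]; ring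
  -- the Hamiltonian on the reference configuration class
  haveI hFT : Fintype (edgesIn G S) := hTfin.fintype
  set cΛ : ℝ := C * (1 + (1 + C₀ * ‖Λ‖) ^ p) with hcΛdef
  have hcΛ : 0 ≤ cΛ := by
    have h1 : (0:ℝ) ≤ (1 + C₀ * ‖Λ‖) ^ p := Real.rpow_nonneg (by positivity) _
    have h2 := hf.hC
    positivity
  set A : Set (↥S → Fn n) := Set.pi Set.univ (fun x : ↥S => closedBall (Λ (x:E d)) (1/2))
    with hAdef
  have hHam : ∀ u ∈ A, Ham G f (ball (0:E d) 1) ε u ≤ (T.ncard : ℝ) * cΛ := by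
    intro u hu
    rw [Ham, tsum_fintype]
    have hterm : ∀ e : edgesIn G S,
        f (e.val.1 - e.val.2) (u ⟨e.val.1, e.prop.2.1⟩ - u ⟨e.val.2, e.prop.2.2⟩) ≤ cΛ := by
      intro e
      have ha := hu ⟨e.val.1, e.prop.2.1⟩ (Set.mem_univ _)
      have hb := hu ⟨e.val.2, e.prop.2.2⟩ (Set.mem_univ _)
      simp only [mem_closedBall, dist_eq_norm] at ha hb
      have hΛab : ‖Λ e.val.1 - Λ e.val.2‖ ≤ C₀ * ‖Λ‖ := by
        rw [← map_sub]
        calc ‖Λ (e.val.1 - e.val.2)‖ ≤ ‖Λ‖ * ‖e.val.1 - e.val.2‖ := Λ.le_opNorm _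
          _ ≤ ‖Λ‖ * C₀ := by
              have h5 := G.edge_short e.val e.prop.1
              rw [dist_eq_norm] at h5
              exact mul_le_mul_of_nonneg_left h5 (norm_nonneg _)
          _ = C₀ * ‖Λ‖ := mul_comm _ _
      have hnorm : ‖u ⟨e.val.1, e.prop.2.1⟩ - u ⟨e.val.2, e.prop.2.2⟩‖ ≤ 1 + C₀ * ‖Λ‖ := by
        calc ‖u ⟨e.val.1, e.prop.2.1⟩ - u ⟨e.val.2, e.prop.2.2⟩‖
            = ‖(u ⟨e.val.1, e.prop.2.1⟩ - Λ e.val.1) + (Λ e.val.1 - Λ e.val.2)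
                + (Λ e.val.2 - u ⟨e.val.2, e.prop.2.2⟩)‖ := by congr 1; abel
          _ ≤ ‖u ⟨e.val.1, e.prop.2.1⟩ - Λ e.val.1‖ + ‖Λ e.val.1 - Λ e.val.2‖
                + ‖Λ e.val.2 - u ⟨e.val.2, e.prop.2.2⟩‖ := norm_add₃_le
          _ = ‖u ⟨e.val.1, e.prop.2.1⟩ - Λ e.val.1‖ + ‖Λ e.val.1 - Λ e.val.2‖
                + ‖u ⟨e.val.2, e.prop.2.2⟩ - Λ e.val.2‖ := by rw [norm_sub_rev (Λ e.val.2)]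
          _ ≤ 1/2 + C₀ * ‖Λ‖ + 1/2 := by
              have := hΛab
              gcongr
          _ = 1 + C₀ * ‖Λ‖ := by ring
      calc f (e.val.1 - e.val.2) (u ⟨e.val.1, e.prop.2.1⟩ - u ⟨e.val.2, e.prop.2.2⟩)
          ≤ C * (1 + ‖u ⟨e.val.1, e.prop.2.1⟩ - u ⟨e.val.2, e.prop.2.2⟩‖ ^ p) :=
            hf.upper _ _
        _ ≤ cΛ := by
            rw [hcΛdef]
            apply mul_le_mul_of_nonneg_left _ hf.hC.le
            refine add_le_add le_rfl ?_
            exact Real.rpow_le_rpow (norm_nonneg _) hnorm (by linarith [hf.hp])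
    have hcard : (Finset.univ : Finset (edgesIn G S)).card = T.ncard := by
      rw [Finset.card_univ, ← Nat.card_eq_fintype_card]
      exact Nat.card_coe_set_eq T
    calc (∑ e : edgesIn G S,
          f (e.val.1 - e.val.2) (u ⟨e.val.1, e.prop.2.1⟩ - u ⟨e.val.2, e.prop.2.2⟩))
        ≤ (Finset.univ : Finset (edgesIn G S)).card • cΛ :=
          Finset.sum_le_card_nsmul _ _ _ (fun e _ => hterm e)
      _ = (T.ncard : ℝ) * cΛ := by rw [hcard, nsmul_eq_mul]
  -- measure computations
  set ch : ℝ≥0∞ := volume (closedBall (0:Fn n) (1/2)) with hchdef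
  have hch : ∀ ξ : Fn n, volume (closedBall ξ (1/2)) = ch := fun ξ => by
    rw [hchdef, Measure.addHaar_closedBall _ _ (by norm_num : (0:ℝ) ≤ 1/2),
      Measure.addHaar_closedBall _ _ (by norm_num : (0:ℝ) ≤ 1/2)]
  have hch0 : ch ≠ 0 := by
    rw [hchdef]; exact (measure_closedBall_pos _ _ (by norm_num)).ne'
  have hchT : ch ≠ ⊤ := by rw [hchdef]; exact measure_closedBall_lt_top.ne
  set vh : ℝ := ch.toReal with hvhdef
  have hvh : 0 < vh := ENNReal.toReal_pos hch0 hchT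
  have hAmeas : MeasurableSet A := MeasurableSet.univ_pi fun x => measurableSet_closedBall
  have hμA : Measure.pi (fun _ : ↥S => (volume : Measure (Fn n))) A = ch ^ N := by
    rw [hAdef, Measure.pi_pi]
    simp only [hch]
    rw [Finset.prod_const, Finset.card_univ]
    congr 1
    rw [hNdef, ← Nat.card_coe_set_eq, Nat.card_eq_fintype_card]
  have hμAtop : Measure.pi (fun _ : ↥S => (volume : Measure (Fn n))) A ≠ ⊤ := by
    rw [hμA]; exact ENNReal.pow_ne_top hchT
  have hμAtoReal : (Measure.pi (fun _ : ↥S => (volume : Measure (Fn n))) A).toReal = vh ^ N := by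
    rw [hμA, ENNReal.toReal_pow, hvhdef]
  have hAB : A ⊆ BCset G (ball (0:E d) 1) ε ⇑Λ := by
    intro u hu x hx
    have h1 := hu x (Set.mem_univ x)
    simp only [mem_closedBall, dist_eq_norm] at h1
    have h2 : ε⁻¹ • (Λ (ε • (x:E d))) = Λ (x:E d) := by
      rw [_root_.map_smul, smul_smul, inv_mul_cancel₀ hε.ne', one_smul]
    rw [h2]
    linarith
  -- case analysis on integrability of the partition function
  show -(β * V)⁻¹ * Real.log (∫ u in BCset G (ball (0:E d) 1) ε ⇑Λ,
      Real.exp (-β * Ham G f (ball (0:E d) 1) ε u)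
        ∂(Measure.pi (fun _ : ↥S => (volume : Measure (Fn n))))) ≤
    cΛ * (Dconst d r C₀ * Kconst d r) + (Kconst d r * |Real.log vh|) / β
  by_cases hint : IntegrableOn (fun u => Real.exp (-β * Ham G f (ball (0:E d) 1) ε u))
      (BCset G (ball (0:E d) 1) ε ⇑Λ) (Measure.pi (fun _ : ↥S => (volume : Measure (Fn n))))
  · -- integrable case
    have hAle : (∫ u in A, Real.exp (-β * Ham G f (ball (0:E d) 1) ε u)
          ∂(Measure.pi (fun _ : ↥S => (volume : Measure (Fn n))))) ≤
        ∫ u in BCset G (ball (0:E d) 1) ε ⇑Λ, Real.exp (-β * Ham G f (ball (0:E d) 1) ε u)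
          ∂(Measure.pi (fun _ : ↥S => (volume : Measure (Fn n)))) :=
      setIntegral_mono_set hint (Filter.Eventually.of_forall fun u => (Real.exp_pos _).le)
        (HasSubset.Subset.eventuallyLE hAB)
    have hconst : Real.exp (-β * ((T.ncard : ℝ) * cΛ)) *
          ((Measure.pi (fun _ : ↥S => (volume : Measure (Fn n)))) A).toReal ≤
        ∫ u in A, Real.exp (-β * Ham G f (ball (0:E d) 1) ε u)
          ∂(Measure.pi (fun _ : ↥S => (volume : Measure (Fn n)))) := by
      apply setIntegral_ge_of_const_le_real hAmeas hμAtop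
      · intro u hu
        apply Real.exp_le_exp.2
        have h5 := hHam u hu
        nlinarith
      · exact hint.mono_set hAB
    have hZpos : 0 < ∫ u in BCset G (ball (0:E d) 1) ε ⇑Λ,
        Real.exp (-β * Ham G f (ball (0:E d) 1) ε u)
          ∂(Measure.pi (fun _ : ↥S => (volume : Measure (Fn n)))) := by
      refine lt_of_lt_of_le ?_ (hconst.trans hAle)
      rw [hμAtoReal]
      positivity
    have hlogZ : -β * ((T.ncard : ℝ) * cΛ) + (N : ℝ) * Real.log vh ≤
        Real.log (∫ u in BCset G (ball (0:E d) 1) ε ⇑Λ,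
          Real.exp (-β * Ham G f (ball (0:E d) 1) ε u)
            ∂(Measure.pi (fun _ : ↥S => (volume : Measure (Fn n))))) := by
      have h0 : (0:ℝ) < Real.exp (-β * ((T.ncard : ℝ) * cΛ)) *
          ((Measure.pi (fun _ : ↥S => (volume : Measure (Fn n)))) A).toReal := by
        rw [hμAtoReal]; positivity
      have h6 := Real.log_le_log h0 (hconst.trans hAle)
      rwa [Real.log_mul (Real.exp_pos _).ne' (by rw [hμAtoReal]; positivity),
        Real.log_exp, hμAtoReal, Real.log_pow] at h6
    -- final arithmetic
    have hD : 0 ≤ Dconst d r C₀ := Dconst_nonneg d hr hC₀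
    have hK : 0 ≤ Kconst d r := Kconst_nonneg d hr
    set RHSv : ℝ := cΛ * (Dconst d r C₀ * Kconst d r) + (Kconst d r * |Real.log vh|) / β
      with hRHSdef
    clear_value u1 N V T ch vh cΛ RHSv
    have hMle : (T.ncard : ℝ) * cΛ ≤ cΛ * Dconst d r C₀ * (Kconst d r * V) :=
      calc (T.ncard : ℝ) * cΛ ≤ (Dconst d r C₀ * N) * cΛ :=
            mul_le_mul_of_nonneg_right hNe hcΛ
        _ ≤ (Dconst d r C₀ * (Kconst d r * V)) * cΛ := by
            apply mul_le_mul_of_nonneg_right _ hcΛ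
            exact mul_le_mul_of_nonneg_left hN hD
        _ = cΛ * Dconst d r C₀ * (Kconst d r * V) := by ring
    have hkey : -(β * V * RHSv) ≤ -β * ((T.ncard : ℝ) * cΛ) + (N : ℝ) * Real.log vh := by
      have h5 : -((N:ℝ) * Real.log vh) ≤ (N:ℝ) * |Real.log vh| := by
        calc -((N:ℝ) * Real.log vh) ≤ |(N:ℝ) * Real.log vh| := neg_le_abs _
          _ = (N:ℝ) * |Real.log vh| := by rw [abs_mul, Nat.abs_cast]
      have hNV : (N:ℝ) * |Real.log vh| ≤ Kconst d r * V * |Real.log vh| :=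
        mul_le_mul_of_nonneg_right hN (abs_nonneg _)
      have hexp : β * V * RHSv =
          β * (cΛ * Dconst d r C₀ * (Kconst d r * V)) + Kconst d r * V * |Real.log vh| := by
        rw [hRHSdef]
        field_simp
      have h7 : β * ((T.ncard : ℝ) * cΛ) ≤ β * (cΛ * Dconst d r C₀ * (Kconst d r * V)) :=
        mul_le_mul_of_nonneg_left hMle hβ.le
      linarith
    have hβV : (0:ℝ) < β * V := mul_pos hβ hVpos
    have h8 : -(β * V)⁻¹ * Real.log (∫ u in BCset G (ball (0:E d) 1) ε ⇑Λ,
          Real.exp (-β * Ham G f (ball (0:E d) 1) ε u)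
            ∂(Measure.pi (fun _ : ↥S => (volume : Measure (Fn n))))) ≤
        -(β * V)⁻¹ * (-(β * V * RHSv)) :=
      mul_le_mul_of_nonpos_left (hkey.trans hlogZ) (neg_nonpos.2 (inv_nonneg.2 hβV.le))
    have h9 : -(β * V)⁻¹ * (-(β * V * RHSv)) = RHSv := by
      rw [neg_mul_neg, ← mul_assoc, inv_mul_cancel₀ hβV.ne', one_mul]
    calc -(β * V)⁻¹ * Real.log (∫ u in BCset G (ball (0:E d) 1) ε ⇑Λ,
          Real.exp (-β * Ham G f (ball (0:E d) 1) ε u)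
            ∂(Measure.pi (fun _ : ↥S => (volume : Measure (Fn n))))) ≤
        -(β * V)⁻¹ * (-(β * V * RHSv)) := h8
      _ = RHSv := h9
  · -- non-integrable case: the junk value is `0`
    rw [integral_undef hint, Real.log_zero, mul_zero]
    have hD : 0 ≤ Dconst d r C₀ := Dconst_nonneg d hr hC₀
    have hK : 0 ≤ Kconst d r := Kconst_nonneg d hr
    have h1 : 0 ≤ cΛ * (Dconst d r C₀ * Kconst d r) :=
      mul_nonneg hcΛ (mul_nonneg hD hK)
    have h2 : 0 ≤ (Kconst d r * |Real.log vh|) / β :=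
      div_nonneg (mul_nonneg hK (abs_nonneg _)) hβ.le
    linarith

end Aux
/-- Lemma (upper growth bound for the limit free-energy density). -/
theorem statement6
    (hR : 0 < R) (hr : 0 < r) (hRC : 6 * R < C₀)
    (f : E d → Fn n → ℝ) (C p : ℝ) (hf : Hypo1 f C p)
    {Ω : Type*} [MeasurableSpace Ω] (P : Measure Ω) [IsProbabilityMeasure P]
    (shift : (Fin d → ℤ) → Ω → Ω)
    (hzero : ∀ ω, shift 0 ω = ω)
    (hadd : ∀ z w ω, shift z (shift w ω) = shift (z + w) ω)
    (hpres : ∀ z, MeasurePreserving (shift z) P P)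
    (herg : ∀ A : Set Ω, MeasurableSet A → (∀ z, shift z ⁻¹' A = A) → P A = 0 ∨ P A = 1)
    (Gr : Ω → AdmissibleGraph d R r C₀)
    (hGrL : ∀ z ω, (Gr (shift z ω)).L = (fun x => x + intVec d z) '' (Gr ω).L)
    (hGrB : ∀ z ω, (Gr (shift z ω)).B =
        (fun e : E d × E d => (e.1 + intVec d z, e.2 + intVec d z)) '' (Gr ω).B)
    (Wfam : ℝ → (E d →L[ℝ] Fn n) → ℝ)
    (hWfam : ∀ β : ℝ, 0 < β → ∀ (Λ : E d →L[ℝ] Fn n) (D : Set (E d)), IsLipschitzDomain D →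
      ∀ᵐ ω ∂P, Tendsto (fun ε => freeEnergy (Gr ω) f D (⇑Λ) ε β) (𝓝[>] (0:ℝ)) (𝓝 (Wfam β Λ)))
    :
    ∃ C' : ℝ, 0 < C' ∧ ∀ (Λ : E d →L[ℝ] Fn n) (β : ℝ), 0 < β →
      Wfam β Λ ≤ C' * ‖Λ‖ ^ p + C' * (1 + (1 + |Real.log β|) / β) := by
  classical
  have hC₀pos : 0 < C₀ := by linarith
  have hp1 : 1 < p := hf.hp
  have hCpos : 0 < C := hf.hC
  -- abbreviations for the constants in the per-scale estimate
  set K : ℝ := Kconst d r with hKdef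
  set Dg : ℝ := Dconst d r C₀ with hDdef
  set lv : ℝ := |Real.log (volume (closedBall (0:Fn n) (1/2))).toReal| with hlvdef
  have hK0 : 0 ≤ K := Kconst_nonneg d hr
  have hD0 : 0 ≤ Dg := Dconst_nonneg d hr hC₀pos
  have hlv0 : 0 ≤ lv := abs_nonneg _
  have h2p : (0:ℝ) < 2 ^ p := Real.rpow_pos_of_pos (by norm_num) _
  have hC₀p : (0:ℝ) < C₀ ^ p := Real.rpow_pos_of_pos hC₀pos _
  refine ⟨C * (1 + 2 ^ p) * (Dg * K) + C * 2 ^ p * C₀ ^ p * (Dg * K) + K * lv + 1, ?_, ?_⟩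
  · have h1 : 0 ≤ C * (1 + 2 ^ p) * (Dg * K) := by positivity
    have h2 : 0 ≤ C * 2 ^ p * C₀ ^ p * (Dg * K) := by positivity
    have h3 : 0 ≤ K * lv := mul_nonneg hK0 hlv0
    linarith
  intro Λ β hβ
  set C' : ℝ := C * (1 + 2 ^ p) * (Dg * K) + C * 2 ^ p * C₀ ^ p * (Dg * K) + K * lv + 1
    with hC'def
  -- choose a good realization of the graph
  haveI : (MeasureTheory.ae P).NeBot := MeasureTheory.ae_neBot.2 (IsProbabilityMeasure.ne_zero P)
  obtain ⟨ω, hω⟩ := (hWfam β hβ Λ (ball (0:E d) 1) ball_isLipschitzDomain).exists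
  -- the uniform bound for small ε
  have hbound : ∀ᶠ ε in 𝓝[>] (0:ℝ), freeEnergy (Gr ω) f (ball (0:E d) 1) (⇑Λ) ε β ≤
      (C * (1 + (1 + C₀ * ‖Λ‖) ^ p)) * (Dg * K) + (K * lv) / β := by
    have hmem : Set.Ioo (0:ℝ) (2/r) ∈ 𝓝[>] (0:ℝ) :=
      Ioo_mem_nhdsGT_of_mem ⟨le_refl 0, by positivity⟩
    filter_upwards [hmem] with ε hε
    exact freeEnergy_ball_le hr hC₀pos f C p hf (Gr ω) Λ β ε hβ hε.1 hε.2
  have hlim : Wfam β Λ ≤ (C * (1 + (1 + C₀ * ‖Λ‖) ^ p)) * (Dg * K) + (K * lv) / β :=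
    le_of_tendsto hω hbound
  -- massage the constant
  have hΛ0 : (0:ℝ) ≤ ‖Λ‖ := norm_nonneg _
  have hΛp : (0:ℝ) ≤ ‖Λ‖ ^ p := Real.rpow_nonneg hΛ0 _
  have hgrowth : (1 + C₀ * ‖Λ‖) ^ p ≤ 2 ^ p + 2 ^ p * (C₀ ^ p * ‖Λ‖ ^ p) := by
    have hp0 : (0:ℝ) ≤ p := by linarith
    rcases le_total (C₀ * ‖Λ‖) 1 with hc | hc
    · have h1 : (1 + C₀ * ‖Λ‖) ^ p ≤ 2 ^ p :=
        Real.rpow_le_rpow (by positivity) (by linarith) hp0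
      have h2 : (0:ℝ) ≤ 2 ^ p * (C₀ ^ p * ‖Λ‖ ^ p) := by positivity
      linarith
    · have h1 : (1 + C₀ * ‖Λ‖) ^ p ≤ (2 * (C₀ * ‖Λ‖)) ^ p :=
        Real.rpow_le_rpow (by positivity) (by linarith) hp0
      have h2 : ((2:ℝ) * (C₀ * ‖Λ‖)) ^ p = 2 ^ p * (C₀ ^ p * ‖Λ‖ ^ p) := by
        rw [Real.mul_rpow (by norm_num) (by positivity),
          Real.mul_rpow hC₀pos.le hΛ0]
      have h3 : (0:ℝ) < 2 ^ p := h2p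
      nlinarith
  have hstep1 : (C * (1 + (1 + C₀ * ‖Λ‖) ^ p)) * (Dg * K) ≤
      C * (1 + 2 ^ p) * (Dg * K) + C * 2 ^ p * C₀ ^ p * (Dg * K) * ‖Λ‖ ^ p := by
    have hDK : 0 ≤ Dg * K := mul_nonneg hD0 hK0
    have h1 : C * (1 + (1 + C₀ * ‖Λ‖) ^ p) ≤
        C * (1 + 2 ^ p) + C * 2 ^ p * C₀ ^ p * ‖Λ‖ ^ p := by
      have := mul_le_mul_of_nonneg_left hgrowth hCpos.le
      nlinarith
    calc (C * (1 + (1 + C₀ * ‖Λ‖) ^ p)) * (Dg * K)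
        ≤ (C * (1 + 2 ^ p) + C * 2 ^ p * C₀ ^ p * ‖Λ‖ ^ p) * (Dg * K) :=
          mul_le_mul_of_nonneg_right h1 hDK
      _ = C * (1 + 2 ^ p) * (Dg * K) + C * 2 ^ p * C₀ ^ p * (Dg * K) * ‖Λ‖ ^ p := by ring
  have haux1 : (0:ℝ) ≤ C * (1 + 2 ^ p) * (Dg * K) := by positivity
  have haux2 : (0:ℝ) ≤ C * 2 ^ p * C₀ ^ p * (Dg * K) := by positivity
  have haux3 : (0:ℝ) ≤ K * lv := mul_nonneg hK0 hlv0
  have hC'0 : (0:ℝ) < C' := by rw [hC'def]; linarith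
  have ht1 : C * (1 + 2 ^ p) * (Dg * K) ≤ C' := by rw [hC'def]; linarith
  have ht2 : C * 2 ^ p * C₀ ^ p * (Dg * K) ≤ C' := by rw [hC'def]; linarith
  have hKlv : K * lv ≤ C' := by rw [hC'def]; linarith
  have hstep2 : (K * lv) / β ≤ C' * (1 + |Real.log β|) / β := by
    have hnum : K * lv ≤ C' * (1 + |Real.log β|) :=
      calc K * lv ≤ C' := hKlv
        _ = C' * 1 := (mul_one C').symm
        _ ≤ C' * (1 + |Real.log β|) :=
            mul_le_mul_of_nonneg_left (by linarith [abs_nonneg (Real.log β)]) hC'0.le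
    exact (div_le_div_iff_of_pos_right hβ).2 hnum
  clear_value K Dg lv C'
  calc Wfam β Λ ≤ (C * (1 + (1 + C₀ * ‖Λ‖) ^ p)) * (Dg * K) + (K * lv) / β := hlim
    _ ≤ (C * (1 + 2 ^ p) * (Dg * K) + C * 2 ^ p * C₀ ^ p * (Dg * K) * ‖Λ‖ ^ p)
        + C' * (1 + |Real.log β|) / β := by linarith
    _ ≤ C' * ‖Λ‖ ^ p + C' * (1 + (1 + |Real.log β|) / β) := by
        have h4 : C * 2 ^ p * C₀ ^ p * (Dg * K) * ‖Λ‖ ^ p ≤ C' * ‖Λ‖ ^ p :=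
          mul_le_mul_of_nonneg_right ht2 hΛp
        have h5 : C' * (1 + (1 + |Real.log β|) / β) = C' + C' * (1 + |Real.log β|) / β := by
          ring
        linarith
end Polymer
end
end

section
/- Let G be an admissible graph, p>1, ε>0, and O⊂ℝ^d a bounded Lipschitz domain. Consider the finite graph G_{O,ε}=(O_ε^𝓛, {(x,y)∈𝔹 : x,y∈O_ε^𝓛}) and let N_{O,ε} be its number of connected components. Suppose V is a set of maps u:O_ε^𝓛→ℝⁿ for which there exist γ>0 and points z_x∈ℝⁿ, indexed by the vertices x∈𝓛 with dist(x,∂O_ε)≤C₀, such that every u∈V satisfies |u(x)−z_x|<γ for all such x. Then, with C₁ = max{ vol(B₁(0)⊂ℝⁿ), ∫_{ℝⁿ} exp(−|ζ|^p)dζ }, for all α>0: ∫_V exp(−α‖∇_𝔹 u‖^p_{ℓ^p_ε(O)}) du ≤ (C₁γⁿ)^{N_{O,ε}} · (α^{−n/p} C₁)^{|O_ε^𝓛|−N_{O,ε}}. -/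
open MeasureTheory Filter Topology Metric Set
open scoped ENNReal NNReal RealInnerProductSpace Pointwise

noncomputable section

namespace Polymer

open Classical

variable {d n : ℕ} {R r C₀ : ℝ}

section Auxiliary

open Function MeasureTheory

lemma C1const_nonneg (n : ℕ) (p : ℝ) : 0 ≤ C1const n p :=
  le_trans ENNReal.toReal_nonneg (le_max_left _ _)

variable {d n : ℕ} {R r C₀ : ℝ}

lemma chainRel_refl (G : AdmissibleGraph d R r C₀) {s : Set (E d)} {x : E d} (hx : x ∈ s) :
    chainRel G s x x :=
  ⟨0, fun _ => x, rfl, rfl, fun _ _ => hx, fun i hi => absurd hi (Nat.not_lt_zero i)⟩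

lemma chainRel_symm {G : AdmissibleGraph d R r C₀} {s : Set (E d)} {x y : E d}
    (h : chainRel G s x y) : chainRel G s y x := by
  obtain ⟨m, q, h0, hm, hmem, hedge⟩ := h
  refine ⟨m, fun i => q (m - i), by simpa using hm, by simpa using h0,
    fun i _ => hmem _ (Nat.sub_le _ _), fun i hi => ?_⟩
  have h := hedge (m - (i + 1)) (by omega)
  have e1 : m - (i + 1) + 1 = m - i := by omega
  rw [e1] at h
  tauto

lemma chainRel_trans {G : AdmissibleGraph d R r C₀} {s : Set (E d)} {x y z : E d}
    (h1 : chainRel G s x y) (h2 : chainRel G s y z) : chainRel G s x z := by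
  obtain ⟨m1, q1, h10, h1m, hmem1, he1⟩ := h1
  obtain ⟨m2, q2, h20, h2m, hmem2, he2⟩ := h2
  refine ⟨m1 + m2, fun i => if i ≤ m1 then q1 i else q2 (i - m1), by simp [h10], ?_, ?_, ?_⟩
  · by_cases h : m1 + m2 ≤ m1
    · have hm2 : m2 = 0 := by omega
      rw [hm2] at h2m
      simp only [if_pos h]
      rw [show m1 + m2 = m1 by omega, h1m, ← h20, h2m]
    · simp only [if_neg h]
      rw [show m1 + m2 - m1 = m2 by omega, h2m]
  · intro i hi
    by_cases h : i ≤ m1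
    · simpa [h] using hmem1 i h
    · simp only [if_neg h]
      exact hmem2 _ (by omega)
  · intro i hi
    rcases lt_trichotomy i m1 with hlt | heq | hgt
    · simp only [if_pos (le_of_lt hlt), if_pos (Nat.succ_le_of_lt hlt)]
      exact he1 i hlt
    · subst heq
      have hm2 : 0 < m2 := by omega
      simp only [if_pos (le_refl i), if_neg (by omega : ¬ i + 1 ≤ i)]
      rw [show i + 1 - i = 1 by omega, h1m, ← h20]
      exact he2 0 hm2
    · simp only [if_neg (by omega : ¬ i ≤ m1), if_neg (by omega : ¬ i + 1 ≤ m1)]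
      rw [show i + 1 - m1 = (i - m1) + 1 by omega]
      exact he2 (i - m1) (by omega)

lemma exists_boundary_chain (hR : 0 < R) (hRC : 6 * R < C₀)
    (G : AdmissibleGraph d R r C₀) {O : Set (E d)} {ε : ℝ}
    {x : E d} (hx : x ∈ latt G O ε) :
    ∃ y, y ∈ latt G O ε ∧ chainRel G (latt G O ε) x y ∧
      infDist y (frontier (scaleSet ε O)) ≤ C₀ := by
  classical
  have hC0 : (0:ℝ) < C₀ := by linarith
  rcases Set.eq_empty_or_nonempty (frontier (scaleSet ε O)) with hfr | ⟨w, hw⟩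
  · refine ⟨x, hx, chainRel_refl G hx, ?_⟩
    rw [hfr]
    simpa [Metric.infDist_empty] using hC0.le
  · obtain ⟨y0, hy0L, hy0R⟩ := G.cover w
    obtain ⟨m, q, h0, hm, hedge, _⟩ := G.connected x hx.1 y0 hy0L
    have hqL : ∀ i ≤ m, q i ∈ G.L := by
      intro i hi
      rcases Nat.eq_zero_or_pos i with h | h
      · rw [h, h0]; exact hx.1
      · rcases hedge (i - 1) (by omega) with he | he
        · have := G.edge_mem_right _ he
          simpa [show i - 1 + 1 = i by omega] using this
        · have := G.edge_mem_left _ he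
          simpa [show i - 1 + 1 = i by omega] using this
    by_cases hall : ∀ i ≤ m, q i ∈ scaleSet ε O
    · refine ⟨y0, ⟨hy0L, hm ▸ hall m le_rfl⟩,
        ⟨m, q, h0, hm, fun i hi => ⟨hqL i hi, hall i hi⟩, hedge⟩, ?_⟩
      calc infDist y0 (frontier (scaleSet ε O)) ≤ dist y0 w := infDist_le_dist_of_mem hw
        _ ≤ R := by rw [dist_comm]; exact hy0R
        _ ≤ C₀ := by linarith
    · push_neg at hall
      have hex : ∃ i, i ≤ m ∧ q i ∉ scaleSet ε O := by
        obtain ⟨i, hi1, hi2⟩ := hall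
        exact ⟨i, hi1, hi2⟩
      have hkspec := Nat.find_spec hex
      set k := Nat.find hex with hkdef
      have hk0 : k ≠ 0 := by
        intro h
        rw [h, h0] at hkspec
        exact hkspec.2 hx.2
      have hmin : ∀ i, i < k → i ≤ m → q i ∈ scaleSet ε O := by
        intro i hik him
        by_contra hcon
        exact Nat.find_min hex hik ⟨him, hcon⟩
      have hkm : k ≤ m := hkspec.1
      have hjm : k - 1 ≤ m := by omega
      have hjmem : q (k - 1) ∈ scaleSet ε O := hmin (k - 1) (by omega) hjm
      have hylatt : q (k - 1) ∈ latt G O ε := ⟨hqL _ hjm, hjmem⟩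
      refine ⟨q (k - 1), hylatt, ?_, ?_⟩
      · exact ⟨k - 1, q, h0, rfl,
          fun i hi => ⟨hqL i (by omega), hmin i (by omega) (by omega)⟩,
          fun i hi => hedge i (by omega)⟩
      · have hne : scaleSet ε O ≠ Set.univ := by
          intro h
          exact hkspec.2 (h ▸ Set.mem_univ _)
        obtain ⟨w', hw', heq⟩ := exists_mem_frontier_infDist_compl_eq_dist hjmem hne
        have h1 : infDist (q (k - 1)) (frontier (scaleSet ε O)) ≤ dist (q (k - 1)) w' :=
          infDist_le_dist_of_mem hw'
        have h3 : infDist (q (k - 1)) ((scaleSet ε O)ᶜ) ≤ dist (q (k - 1)) (q k) :=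
          infDist_le_dist_of_mem hkspec.2
        have h4 : dist (q (k - 1)) (q k) ≤ C₀ := by
          rcases hedge (k - 1) (by omega) with he | he
          · have := G.edge_short _ he
            simpa [show k - 1 + 1 = k by omega] using this
          · have := G.edge_short _ he
            rw [show k - 1 + 1 = k by omega] at this
            rw [dist_comm]
            exact this
        rw [← heq] at h1
        linarith

lemma latt_finite (hr : 0 < r) (G : AdmissibleGraph d R r C₀) {O : Set (E d)}
    (hO : Bornology.IsBounded O) {ε : ℝ} (hε : 0 < ε) : (latt G O ε).Finite := by
  obtain ⟨M, hM⟩ := hO.subset_closedBall 0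
  have hbd : latt G O ε ⊆ Metric.closedBall 0 (M / ε) := by
    intro x hx
    have h1 := hM hx.2
    simp only [Metric.mem_closedBall, dist_zero_right] at h1 ⊢
    rw [norm_smul, Real.norm_eq_abs, abs_of_pos hε] at h1
    rw [le_div_iff₀ hε]
    linarith
  obtain ⟨t, ht⟩ := (isCompact_closedBall (0 : E d) (M / ε)).elim_finite_subcover
    (fun c : E d => Metric.ball c (r / 2)) (fun _ => Metric.isOpen_ball)
    (fun y _ => Set.mem_iUnion.2 ⟨y, Metric.mem_ball_self (by linarith)⟩)
  have hsub : latt G O ε ⊆ ⋃ c ∈ t, (latt G O ε ∩ Metric.ball c (r / 2)) := by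
    intro x hx
    have := ht (hbd hx)
    simp only [Set.mem_iUnion] at this ⊢
    obtain ⟨c, hc, hxc⟩ := this
    exact ⟨c, hc, hx, hxc⟩
  refine Set.Finite.subset (Set.Finite.biUnion t.finite_toSet fun c _ => ?_) hsub
  apply Set.Subsingleton.finite
  intro a ha b hb
  by_contra hab
  have hsep := G.separated a ha.1.1 b hb.1.1 hab
  have h1 := Metric.mem_ball.1 ha.2
  have h2 := Metric.mem_ball.1 hb.2
  have hd : dist a b < r := by
    calc dist a b ≤ dist a c + dist c b := dist_triangle _ _ _
      _ < r / 2 + r / 2 := by rw [dist_comm c b]; linarith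
      _ = r := by ring
  linarith

lemma integrable_exp_neg_norm_rpow (n : ℕ) {p : ℝ} (hp : 1 < p) :
    Integrable (fun x : Fn n => Real.exp (-‖x‖ ^ p)) := by
  have hp0 : (0:ℝ) < p := by linarith
  set K : ℝ := (n : ℝ) + 1 with hK
  have hKpos : (0:ℝ) < K := by positivity
  set T : ℝ := K ^ (1 / (p - 1)) with hT
  have hTpos : 0 < T := Real.rpow_pos_of_pos hKpos _
  have key : ∀ t : ℝ, 0 ≤ t → K * t - t ^ p ≤ K * T := by
    intro t ht
    rcases le_or_gt t T with h | h
    · have h1 : 0 ≤ t ^ p := Real.rpow_nonneg ht p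
      nlinarith
    · have htpos : 0 < t := lt_trans hTpos h
      have h1 : T ^ (p - 1) ≤ t ^ (p - 1) := Real.rpow_le_rpow hTpos.le h.le (by linarith)
      have h2 : T ^ (p - 1) = K := by
        rw [hT, ← Real.rpow_mul hKpos.le, one_div,
          inv_mul_cancel₀ (by intro hc; rw [sub_eq_zero] at hc; exact (ne_of_gt hp) hc),
          Real.rpow_one]
      have h3 : t ^ (1 + (p - 1)) = t * t ^ (p - 1) := by
        rw [Real.rpow_add htpos, Real.rpow_one]
      have hpe : 1 + (p - 1) = p := by ring
      rw [hpe] at h3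
      rw [h2] at h1
      nlinarith
  have hcont : Continuous (fun x : Fn n => Real.exp (-‖x‖ ^ p)) :=
    Real.continuous_exp.comp (((Real.continuous_rpow_const hp0.le).comp continuous_norm).neg)
  have hbound : ∀ x : Fn n, ‖Real.exp (-‖x‖ ^ p)‖ ≤
      Real.exp (K * T) * (1 + ‖x‖) ^ (-K) := by
    intro x
    rw [Real.norm_eq_abs, Real.abs_exp]
    have h01 : (0:ℝ) < 1 + ‖x‖ := by positivity
    have h2 : (1 + ‖x‖) ^ K ≤ Real.exp (K * ‖x‖) := by
      have h3 : (1 + ‖x‖) ≤ Real.exp ‖x‖ := by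
        have := Real.add_one_le_exp ‖x‖
        linarith
      calc (1 + ‖x‖) ^ K ≤ (Real.exp ‖x‖) ^ K :=
            Real.rpow_le_rpow h01.le h3 hKpos.le
        _ = Real.exp (K * ‖x‖) := by
            rw [Real.rpow_def_of_pos (Real.exp_pos _), Real.log_exp, mul_comm]
    have h4 : Real.exp (-‖x‖ ^ p) ≤ Real.exp (K * T) * Real.exp (-(K * ‖x‖)) := by
      rw [← Real.exp_add]
      apply Real.exp_le_exp.2
      have := key ‖x‖ (norm_nonneg x)
      linarith
    have h5 : Real.exp (-(K * ‖x‖)) ≤ ((1 + ‖x‖) ^ K)⁻¹ := by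
      rw [Real.exp_neg]
      exact inv_anti₀ (by positivity) h2
    calc Real.exp (-‖x‖ ^ p) ≤ Real.exp (K * T) * Real.exp (-(K * ‖x‖)) := h4
      _ ≤ Real.exp (K * T) * ((1 + ‖x‖) ^ K)⁻¹ :=
          mul_le_mul_of_nonneg_left h5 (Real.exp_pos _).le
      _ = Real.exp (K * T) * (1 + ‖x‖) ^ (-K) := by
          rw [Real.rpow_neg h01.le]
  have hint : Integrable (fun x : Fn n => (1 + ‖x‖) ^ (-K)) := by
    apply integrable_one_add_norm
    rw [finrank_euclideanSpace_fin, hK]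
    norm_num
  exact (hint.const_mul (Real.exp (K * T))).mono'
    hcont.aestronglyMeasurable (Eventually.of_forall hbound)

lemma J_eq_aux (n : ℕ) {p α : ℝ} (hp : 1 < p) (hα : 0 < α) :
    (∫⁻ a : Fn n, ENNReal.ofReal (Real.exp (-(α * ‖a‖ ^ p)))) =
      ENNReal.ofReal (α ^ (-(n:ℝ) / p) * ∫ ζ : Fn n, Real.exp (-‖ζ‖ ^ p)) := by
  have hp0 : (0:ℝ) < p := by linarith
  set Rc : ℝ := α ^ (1 / p) with hRc
  have hRpos : 0 < Rc := Real.rpow_pos_of_pos hα _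
  have hfun : ∀ a : Fn n, Real.exp (-(α * ‖a‖ ^ p)) = Real.exp (-‖Rc • a‖ ^ p) := by
    intro a
    congr 1
    rw [norm_smul, Real.norm_eq_abs, abs_of_pos hRpos,
      Real.mul_rpow hRpos.le (norm_nonneg a), hRc, ← Real.rpow_mul hα.le,
      one_div_mul_cancel (ne_of_gt hp0), Real.rpow_one]
  have hint : Integrable (fun a : Fn n => Real.exp (-‖a‖ ^ p)) :=
    integrable_exp_neg_norm_rpow n hp
  have hint2 : Integrable (fun a : Fn n => Real.exp (-(α * ‖a‖ ^ p))) := by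
    simp only [hfun]
    exact hint.comp_smul hRpos.ne'
  rw [← ofReal_integral_eq_lintegral_ofReal hint2
    (Eventually.of_forall fun a => (Real.exp_pos _).le)]
  congr 1
  calc (∫ a : Fn n, Real.exp (-(α * ‖a‖ ^ p)))
      = ∫ a : Fn n, Real.exp (-‖Rc • a‖ ^ p) := by simp only [hfun]
    _ = |((Rc ^ Module.finrank ℝ (Fn n))⁻¹)| • ∫ ζ : Fn n, Real.exp (-‖ζ‖ ^ p) :=
        Measure.integral_comp_smul volume (fun ζ : Fn n => Real.exp (-‖ζ‖ ^ p)) Rc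
    _ = α ^ (-(n:ℝ) / p) * ∫ ζ : Fn n, Real.exp (-‖ζ‖ ^ p) := by
        rw [smul_eq_mul]
        congr 1
        rw [abs_of_nonneg (by positivity), finrank_euclideanSpace_fin,
          ← Real.rpow_natCast Rc n, hRc, ← Real.rpow_mul hα.le, ← Real.rpow_neg hα.le]
        congr 1
        field_simp

lemma core_prod_lintegral {S : Type} [Fintype S] [DecidableEq S] {n : ℕ}
    (Gf : S → (S → Fn n) → ℝ≥0∞) (c : S → ℝ≥0∞) (rk : S → ℕ) (pa : S → S)
    (hGmeas : ∀ x, Measurable (Gf x))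
    (hdep : ∀ x (u v : S → Fn n), u x = v x → u (pa x) = v (pa x) → Gf x u = Gf x v)
    (hlt : ∀ y, pa y ≠ y → rk (pa y) < rk y)
    (hint : ∀ x u, (∫⁻ a, Gf x (Function.update u x a)) = c x) :
    (∫⁻ u, ∏ x, Gf x u ∂(Measure.pi fun _ : S => (volume : Measure (Fn n)))) = ∏ x, c x := by
  classical
  have hFmeas : Measurable fun u : S → Fn n => ∏ x, Gf x u :=
    Finset.measurable_prod _ fun i _ => hGmeas i
  have key : ∀ t : Finset S, (∀ y : S, pa y ∈ t → pa y ≠ y → y ∈ t) →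
      (MeasureTheory.lmarginal (fun _ : S => (volume : Measure (Fn n))) t
        (fun u => ∏ x, Gf x u)) =
        fun u => (∏ x ∈ t, c x) * ∏ x ∈ tᶜ, Gf x u := by
    intro t
    induction t using Finset.strongInduction with
    | _ t ih =>
      intro hclosed
      rcases Finset.eq_empty_or_nonempty t with rfl | hne
      · funext u
        simp [MeasureTheory.lmarginal_empty, Finset.compl_empty]
      · obtain ⟨x, hxt, hxmin⟩ := t.exists_min_image rk hne
        have hxe : x ∉ t.erase x := Finset.notMem_erase x t
        have hins : insert x (t.erase x) = t := Finset.insert_erase hxt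
        have hclosed' : ∀ y : S, pa y ∈ t.erase x → pa y ≠ y → y ∈ t.erase x := by
          intro y hy hyne
          have hyt : y ∈ t := hclosed y (Finset.mem_of_mem_erase hy) hyne
          refine Finset.mem_erase.2 ⟨?_, hyt⟩
          rintro rfl
          have h1 : pa y ∈ t := Finset.mem_of_mem_erase hy
          have h2 := hxmin _ h1
          have h3 := hlt y hyne
          omega
        have hih := ih (t.erase x) (Finset.erase_ssubset hxt) hclosed'
        funext u
        rw [← hins, MeasureTheory.lmarginal_insert _ hFmeas hxe]
        simp only [hih]
        have hcompl : (t.erase x)ᶜ = insert x tᶜ := Finset.compl_erase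
        have hxntc : x ∉ tᶜ := by simp [hxt]
        have hprodeq : ∀ a : Fn n,
            ((∏ y ∈ t.erase x, c y) * ∏ y ∈ (t.erase x)ᶜ, Gf y (Function.update u x a)) =
              ((∏ y ∈ t.erase x, c y) * ∏ y ∈ tᶜ, Gf y u) * Gf x (Function.update u x a) := by
          intro a
          rw [hcompl, Finset.prod_insert hxntc]
          have heq : (∏ y ∈ tᶜ, Gf y (Function.update u x a)) = ∏ y ∈ tᶜ, Gf y u := by
            apply Finset.prod_congr rfl
            intro y hy
            have hyx : y ≠ x := by rintro rfl; exact hxntc hy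
            have hpyx : pa y ≠ x := by
              intro h
              by_cases hyne : pa y = y
              · exact hyx (by rw [← hyne, h])
              · exact (Finset.mem_compl.1 hy) (hclosed y (h ▸ hxt) hyne)
            exact hdep y _ _ (Function.update_of_ne hyx _ _) (Function.update_of_ne hpyx _ _)
          rw [heq]
          ring
        simp_rw [hprodeq]
        rw [lintegral_const_mul _
          (show Measurable fun a : Fn n => Gf x (Function.update u x a) from
            (hGmeas x).comp (measurable_update u)), hint x u, hins,
          ← Finset.mul_prod_erase t c hxt]
        ring
  have h := key Finset.univ (fun y _ _ => Finset.mem_univ y)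
  rw [MeasureTheory.lintegral_eq_lmarginal_univ (fun _ : S => (0 : Fn n)), h]
  simp [Finset.compl_univ]

end Auxiliary

/-- Lemma (integrating out possibly disconnected subgraphs). -/
theorem statement12
    (hR : 0 < R) (hr : 0 < r) (hRC : 6 * R < C₀)
    (G : AdmissibleGraph d R r C₀) (p : ℝ) (hp : 1 < p) (ε : ℝ) (hε : 0 < ε)
    (O : Set (E d)) (hO : IsLipschitzDomain O)
    (γ : ℝ) (hγ : 0 < γ) (z : E d → Fn n)
    (V : Set (latt G O ε → Fn n))
    (hV : ∀ u ∈ V, ∀ x : latt G O ε,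
        infDist (x : E d) (frontier (scaleSet ε O)) ≤ C₀ → ‖u x - z (x : E d)‖ < γ) :
    ∀ α : ℝ, 0 < α →
      piIntegral n (latt G O ε) V (fun u => Real.exp (-α * gradLpNormP G O ε p u)) ≤
        (C1const n p * γ ^ n) ^ numComponents G (latt G O ε) *
          (α ^ (-(n : ℝ) / p) * C1const n p) ^
            (Nat.card ↥(latt G O ε) - numComponents G (latt G O ε)) := by
  classical
  intro α hα
  have hp0 : (0:ℝ) < p := by linarith
  have hfin : (latt G O ε).Finite := latt_finite hr G hO.bounded hε
  letI hFin : Fintype ↥(latt G O ε) := hfin.fintype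
  -- the component relation
  let r' : ↥(latt G O ε) → ↥(latt G O ε) → Prop :=
    fun a b => chainRel G (latt G O ε) (a : E d) (b : E d)
  have hequiv : Equivalence r' :=
    ⟨fun a => chainRel_refl G a.2, fun h => chainRel_symm h,
      fun h1 h2 => chainRel_trans h1 h2⟩
  -- roots
  have hroot : ∀ c : Quot r', ∃ y : ↥(latt G O ε),
      Quot.mk r' y = c ∧ infDist (y : E d) (frontier (scaleSet ε O)) ≤ C₀ := by
    intro c
    obtain ⟨a, rfl⟩ := Quot.exists_rep c
    obtain ⟨y, hy, hchain, hbd⟩ := exists_boundary_chain hR hRC G a.2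
    exact ⟨⟨y, hy⟩, (@Quot.sound _ r' a ⟨y, hy⟩ hchain).symm, hbd⟩
  let rootQ : Quot r' → ↥(latt G O ε) := fun c => (hroot c).choose
  have hrootQ_mk : ∀ c, Quot.mk r' (rootQ c) = c := fun c => (hroot c).choose_spec.1
  have hrootQ_bd : ∀ c, infDist ((rootQ c : E d)) (frontier (scaleSet ε O)) ≤ C₀ :=
    fun c => (hroot c).choose_spec.2
  let ρ : ↥(latt G O ε) → ↥(latt G O ε) := fun x => rootQ (Quot.mk r' x)
  have hρ_bd : ∀ x, infDist ((ρ x : E d)) (frontier (scaleSet ε O)) ≤ C₀ :=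
    fun x => hrootQ_bd _
  have hρ_chain : ∀ x, r' (ρ x) x := by
    intro x
    have h1 : Quot.mk r' (ρ x) = Quot.mk r' x := hrootQ_mk _
    exact hequiv.eqvGen_iff.mp (Quot.eqvGen_exact h1)
  have hρ_eq : ∀ x y, r' x y → ρ x = ρ y := by
    intro x y h
    have h1 : Quot.mk r' x = Quot.mk r' y := Quot.sound h
    show rootQ (Quot.mk r' x) = rootQ (Quot.mk r' y)
    rw [h1]
  have hρ_root : ∀ c, ρ (rootQ c) = rootQ c := by
    intro c
    show rootQ (Quot.mk r' (rootQ c)) = rootQ c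
    rw [hrootQ_mk]
  -- rank
  let rk : ↥(latt G O ε) → ℕ := fun x => Nat.find (hρ_chain x)
  have hstep : ∀ x, ρ x ≠ x → ∃ y, rk y < rk x ∧ y ≠ x ∧
      (((y : E d), (x : E d)) ∈ G.B ∨ ((x : E d), (y : E d)) ∈ G.B) := by
    intro x hx
    have hrkx : rk x = Nat.find (hρ_chain x) := rfl
    have hspec := Nat.find_spec (hρ_chain x)
    rw [← hrkx] at hspec
    obtain ⟨q, h0, hm, hmem, hedge⟩ := hspec
    have hm0 : rk x ≠ 0 := by
      intro h
      apply hx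
      apply Subtype.ext
      rw [← h0, ← hm, h]
    have hymem : q (rk x - 1) ∈ latt G O ε := hmem (rk x - 1) (by omega)
    have hchain1 : r' (ρ x) ⟨q (rk x - 1), hymem⟩ :=
      ⟨rk x - 1, q, h0, rfl, fun i hi => hmem i (by omega), fun i hi => hedge i (by omega)⟩
    have hρy : ρ (⟨q (rk x - 1), hymem⟩ : ↥(latt G O ε)) = ρ x := by
      rw [← hρ_eq _ _ hchain1, hρ_root]
    have hrky : rk (⟨q (rk x - 1), hymem⟩ : ↥(latt G O ε)) ≤ rk x - 1 := by
      apply Nat.find_le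
      refine ⟨q, ?_, rfl, fun i hi => hmem i (by omega), fun i hi => hedge i (by omega)⟩
      rw [hρy]
      exact h0
    have hlt1 : rk (⟨q (rk x - 1), hymem⟩ : ↥(latt G O ε)) < rk x := by omega
    refine ⟨⟨q (rk x - 1), hymem⟩, hlt1, fun h => absurd (h ▸ hlt1) (lt_irrefl _), ?_⟩
    have he := hedge (rk x - 1) (by omega)
    rw [show rk x - 1 + 1 = rk x by omega, hm] at he
    exact he
  -- parent map
  let pa : ↥(latt G O ε) → ↥(latt G O ε) := fun x =>
    if h : ρ x = x then x else (hstep x h).choose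
  have hpa_spec : ∀ x, ¬ ρ x = x → rk (pa x) < rk x ∧ pa x ≠ x ∧
      ((((pa x) : E d), (x : E d)) ∈ G.B ∨ ((x : E d), ((pa x) : E d)) ∈ G.B) := by
    intro x hx
    have hd : pa x = (hstep x hx).choose := dif_neg hx
    rw [hd]
    exact (hstep x hx).choose_spec
  have hpa_root : ∀ x, ρ x = x → pa x = x := fun x hx => dif_pos hx
  have hlt' : ∀ y, pa y ≠ y → rk (pa y) < rk y := by
    intro y hy
    by_cases h : ρ y = y
    · exact absurd (hpa_root y h) hy
    · exact (hpa_spec y h).1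
  -- the factors
  let J : ℝ≥0∞ := ∫⁻ a : Fn n, ENNReal.ofReal (Real.exp (-(α * ‖a‖ ^ p)))
  let Gfac : ↥(latt G O ε) → (↥(latt G O ε) → Fn n) → ℝ≥0∞ := fun x u =>
    if ρ x = x then (Metric.ball (z (x : E d)) γ).indicator 1 (u x)
    else ENNReal.ofReal (Real.exp (-(α * ‖u x - u (pa x)‖ ^ p)))
  let cst : ↥(latt G O ε) → ℝ≥0∞ := fun x =>
    if ρ x = x then volume (Metric.ball (0 : Fn n) γ) else J
  have hGfac_pos : ∀ x u, ρ x = x →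
      Gfac x u = (Metric.ball (z (x : E d)) γ).indicator 1 (u x) :=
    fun x u hx => if_pos hx
  have hGfac_neg : ∀ x u, ¬ ρ x = x →
      Gfac x u = ENNReal.ofReal (Real.exp (-(α * ‖u x - u (pa x)‖ ^ p))) :=
    fun x u hx => if_neg hx
  have hcst_pos : ∀ x, ρ x = x → cst x = volume (Metric.ball (0 : Fn n) γ) :=
    fun x hx => if_pos hx
  have hcst_neg : ∀ x, ¬ ρ x = x → cst x = J := fun x hx => if_neg hx
  have hGmeas : ∀ x, Measurable (Gfac x) := by
    intro x
    by_cases hx : ρ x = x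
    · have e1 : Gfac x = fun u => (Metric.ball (z (x : E d)) γ).indicator 1 (u x) :=
        funext fun u => hGfac_pos x u hx
      rw [e1]
      exact (measurable_one.indicator measurableSet_ball).comp (measurable_pi_apply x)
    · have e1 : Gfac x = fun u => ENNReal.ofReal (Real.exp (-(α * ‖u x - u (pa x)‖ ^ p))) :=
        funext fun u => hGfac_neg x u hx
      rw [e1]
      apply ENNReal.measurable_ofReal.comp
      apply Real.measurable_exp.comp
      apply Measurable.neg
      apply Measurable.const_mul
      have h0 : Measurable fun u : ↥(latt G O ε) → Fn n => u x - u (pa x) :=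
        (measurable_pi_apply _).sub (measurable_pi_apply _)
      have h1 : Measurable fun u : ↥(latt G O ε) → Fn n => ‖u x - u (pa x)‖ := h0.norm
      exact (Real.continuous_rpow_const hp0.le).measurable.comp h1
  have hdep : ∀ x u v, u x = v x → u (pa x) = v (pa x) → Gfac x u = Gfac x v := by
    intro x u v h1 h2
    by_cases hx : ρ x = x
    · rw [hGfac_pos x u hx, hGfac_pos x v hx, h1]
    · rw [hGfac_neg x u hx, hGfac_neg x v hx, h1, h2]
  have hint : ∀ x u, (∫⁻ a, Gfac x (Function.update u x a)) = cst x := by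
    intro x u
    by_cases hx : ρ x = x
    · rw [hcst_pos x hx]
      have e1 : ∀ a : Fn n, Gfac x (Function.update u x a) =
          (Metric.ball (z (x : E d)) γ).indicator 1 a := by
        intro a
        rw [hGfac_pos x _ hx, Function.update_self]
      simp_rw [e1]
      rw [lintegral_indicator_one measurableSet_ball]
      exact Measure.addHaar_ball_center volume (z (x : E d)) γ
    · have hpax : pa x ≠ x := (hpa_spec x hx).2.1
      rw [hcst_neg x hx]
      have e1 : ∀ a : Fn n, Gfac x (Function.update u x a) =
          ENNReal.ofReal (Real.exp (-(α * ‖a - u (pa x)‖ ^ p))) := by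
        intro a
        rw [hGfac_neg x _ hx, Function.update_self, Function.update_of_ne hpax]
      simp_rw [e1]
      exact lintegral_sub_right_eq_self
        (fun a : Fn n => ENNReal.ofReal (Real.exp (-(α * ‖a‖ ^ p)))) (u (pa x))
  have hcore : (∫⁻ u, ∏ x, Gfac x u
      ∂(Measure.pi fun _ : ↥(latt G O ε) => (volume : Measure (Fn n)))) = ∏ x, cst x :=
    core_prod_lintegral Gfac cst rk pa hGmeas hdep hlt' hint
  -- edges are finite
  haveI hedgesFin : Finite (edgesIn G (latt G O ε)) := by
    apply Finite.of_injective (fun e : edgesIn G (latt G O ε) =>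
      ((⟨e.val.1, e.prop.2.1⟩ : ↥(latt G O ε)), (⟨e.val.2, e.prop.2.2⟩ : ↥(latt G O ε))))
    intro e1 e2 h
    apply Subtype.ext
    have h1 := congrArg (fun q : (↥(latt G O ε) × ↥(latt G O ε)) => (q.1 : E d)) h
    have h2 := congrArg (fun q : (↥(latt G O ε) × ↥(latt G O ε)) => (q.2 : E d)) h
    exact Prod.ext h1 h2
  haveI := Fintype.ofFinite (edgesIn G (latt G O ε))
  -- nonroot sum is dominated by the edge sum
  let NR : Finset ↥(latt G O ε) := Finset.univ.filter (fun x => ¬ ρ x = x)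
  have hedge_of : ∀ x : ↥(latt G O ε), ¬ ρ x = x → ∃ e : edgesIn G (latt G O ε),
      e.val = (((pa x) : E d), (x : E d)) ∨ e.val = ((x : E d), ((pa x) : E d)) := by
    intro x hx
    rcases (hpa_spec x hx).2.2 with h | h
    · exact ⟨⟨(((pa x) : E d), (x : E d)), h, (pa x).2, x.2⟩, Or.inl rfl⟩
    · exact ⟨⟨((x : E d), ((pa x) : E d)), h, x.2, (pa x).2⟩, Or.inr rfl⟩
  have hsum : ∀ u : ↥(latt G O ε) → Fn n,
      (∑ x ∈ NR, ‖u x - u (pa x)‖ ^ p) ≤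
        ∑ e : edgesIn G (latt G O ε),
          ‖u ⟨e.val.1, e.prop.2.1⟩ - u ⟨e.val.2, e.prop.2.2⟩‖ ^ p := by
    intro u
    have hnr : ∀ x : {x // x ∈ NR}, ¬ ρ x.1 = x.1 := fun x => (Finset.mem_filter.1 x.2).2
    set F : edgesIn G (latt G O ε) → ℝ := fun e =>
      ‖u ⟨e.val.1, e.prop.2.1⟩ - u ⟨e.val.2, e.prop.2.2⟩‖ ^ p with hF
    set φ : {x // x ∈ NR} → edgesIn G (latt G O ε) :=
      fun x => (hedge_of x.1 (hnr x)).choose with hφ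
    have hφval : ∀ x : {x // x ∈ NR},
        (φ x).val = (((pa x.1) : E d), (x.1 : E d)) ∨
        (φ x).val = ((x.1 : E d), ((pa x.1) : E d)) :=
      fun x => (hedge_of x.1 (hnr x)).choose_spec
    have hrkp : ∀ x : {x // x ∈ NR}, rk (pa x.1) < rk x.1 := fun x => (hpa_spec x.1 (hnr x)).1
    have hφinj : Function.Injective φ := by
      intro a b hab
      have hra := hrkp a
      have hrb := hrkp b
      have hva := hφval a
      have hvb := hφval b
      rw [hab] at hva
      rcases hva with h1 | h1 <;> rcases hvb with h2 | h2 <;>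
        (have h3 := h1.symm.trans h2;
         have hfst := congrArg Prod.fst h3;
         have hsnd := congrArg Prod.snd h3;
         simp only at hfst hsnd)
      · exact Subtype.ext (Subtype.ext hsnd)
      · have e1 : pa a.1 = b.1 := Subtype.ext hfst
        have e2 : a.1 = pa b.1 := Subtype.ext hsnd
        rw [e1] at hra
        rw [← e2] at hrb
        omega
      · have e1 : a.1 = pa b.1 := Subtype.ext hfst
        have e2 : pa a.1 = b.1 := Subtype.ext hsnd
        rw [e2] at hra
        rw [← e1] at hrb
        omega
      · exact Subtype.ext (Subtype.ext hfst)
    calc (∑ x ∈ NR, ‖u x - u (pa x)‖ ^ p)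
        = ∑ x : {x // x ∈ NR}, ‖u x.1 - u (pa x.1)‖ ^ p :=
          (Finset.sum_coe_sort NR (fun x => ‖u x - u (pa x)‖ ^ p)).symm
      _ = ∑ x : {x // x ∈ NR}, F (φ x) := by
          apply Finset.sum_congr rfl
          intro x _
          rcases hφval x with h1 | h1
          · have ha : (⟨(φ x).val.1, (φ x).prop.2.1⟩ : ↥(latt G O ε)) = pa x.1 :=
              Subtype.ext (congrArg Prod.fst h1)
            have hb : (⟨(φ x).val.2, (φ x).prop.2.2⟩ : ↥(latt G O ε)) = x.1 :=
              Subtype.ext (congrArg Prod.snd h1)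
            rw [hF]
            simp only
            rw [ha, hb, norm_sub_rev]
          · have ha : (⟨(φ x).val.1, (φ x).prop.2.1⟩ : ↥(latt G O ε)) = x.1 :=
              Subtype.ext (congrArg Prod.fst h1)
            have hb : (⟨(φ x).val.2, (φ x).prop.2.2⟩ : ↥(latt G O ε)) = pa x.1 :=
              Subtype.ext (congrArg Prod.snd h1)
            rw [hF]
            simp only
            rw [ha, hb]
      _ = ∑ e ∈ Finset.univ.image φ, F e :=
          (Finset.sum_image (fun a _ b _ h => hφinj h)).symm
      _ ≤ ∑ e : edgesIn G (latt G O ε), F e := by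
          apply Finset.sum_le_sum_of_subset_of_nonneg (Finset.subset_univ _)
          intro e _ _
          exact Real.rpow_nonneg (norm_nonneg _) p
  -- pointwise bound on V
  have hptw : ∀ u ∈ V,
      ENNReal.ofReal (Real.exp (-α * gradLpNormP G O ε p u)) ≤ ∏ x, Gfac x u := by
    intro u hu
    have hval2 : (∏ x, Gfac x u) =
        ∏ x ∈ NR, ENNReal.ofReal (Real.exp (-(α * ‖u x - u (pa x)‖ ^ p))) := by
      rw [← Finset.prod_filter_mul_prod_filter_not Finset.univ
        (fun x => ρ x = x) (fun x => Gfac x u)]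
      have hone : ∀ x ∈ Finset.univ.filter (fun x : ↥(latt G O ε) => ρ x = x),
          Gfac x u = 1 := by
        intro x hx
        have hxx : ρ x = x := (Finset.mem_filter.1 hx).2
        rw [hGfac_pos x u hxx]
        have hmem : u x ∈ Metric.ball (z (x : E d)) γ := by
          rw [Metric.mem_ball, dist_eq_norm]
          exact hV u hu x (by rw [← hxx]; exact hρ_bd x)
        rw [Set.indicator_of_mem hmem]
        rfl
      rw [Finset.prod_eq_one hone, one_mul]
      apply Finset.prod_congr rfl
      intro x hx
      exact hGfac_neg x u (Finset.mem_filter.1 hx).2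
    rw [hval2, ← ENNReal.ofReal_prod_of_nonneg (fun i _ => (Real.exp_pos _).le)]
    apply ENNReal.ofReal_le_ofReal
    rw [← Real.exp_sum]
    apply Real.exp_le_exp.2
    have hs := hsum u
    have hgrad : gradLpNormP G O ε p u = ∑ e : edgesIn G (latt G O ε),
        ‖u ⟨e.val.1, e.prop.2.1⟩ - u ⟨e.val.2, e.prop.2.2⟩‖ ^ p := tsum_fintype _
    rw [hgrad]
    have hsumneg : (∑ x ∈ NR, -(α * ‖u x - u (pa x)‖ ^ p)) =
        -α * ∑ x ∈ NR, ‖u x - u (pa x)‖ ^ p := by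
      rw [Finset.mul_sum]
      apply Finset.sum_congr rfl
      intro x _
      ring
    rw [hsumneg]
    exact mul_le_mul_of_nonpos_left hs (by linarith : -α ≤ 0)
  -- the counting
  have hcount : numComponents G (latt G O ε) =
      (Finset.univ.filter (fun x : ↥(latt G O ε) => ρ x = x)).card := by
    have e : Quot r' ≃ {x : ↥(latt G O ε) // ρ x = x} :=
      { toFun := fun c => ⟨rootQ c, hρ_root c⟩
        invFun := fun x => Quot.mk r' x.1
        left_inv := fun c => hrootQ_mk c
        right_inv := fun x => Subtype.ext x.2 }
    show Nat.card (Quot fun a b : ↥(latt G O ε) =>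
      chainRel G (latt G O ε) (a : E d) (b : E d)) = _
    rw [Nat.card_congr e, Nat.card_eq_fintype_card]
    exact Fintype.card_subtype _
  have hcardS : Nat.card ↥(latt G O ε) = Fintype.card ↥(latt G O ε) :=
    Nat.card_eq_fintype_card
  -- the product bound
  have hfinal : (∏ x, cst x) ≤ ENNReal.ofReal
      ((C1const n p * γ ^ n) ^ numComponents G (latt G O ε) *
        (α ^ (-(n : ℝ) / p) * C1const n p) ^
          (Nat.card ↥(latt G O ε) - numComponents G (latt G O ε))) := by
    have hNrcard : (Finset.univ.filter (fun x : ↥(latt G O ε) => ¬ ρ x = x)).card =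
        Fintype.card ↥(latt G O ε) -
          (Finset.univ.filter (fun x : ↥(latt G O ε) => ρ x = x)).card := by
      have := Finset.card_filter_add_card_filter_not
        (s := (Finset.univ : Finset ↥(latt G O ε))) (p := fun x => ρ x = x)
      rw [← Finset.card_univ]
      omega
    have hprodsplit : (∏ x, cst x) =
        (volume (Metric.ball (0 : Fn n) γ)) ^
            (Finset.univ.filter (fun x : ↥(latt G O ε) => ρ x = x)).card *
          J ^ (Finset.univ.filter (fun x : ↥(latt G O ε) => ¬ ρ x = x)).card := by
      rw [← Finset.prod_filter_mul_prod_filter_not Finset.univ (fun x => ρ x = x) cst]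
      congr 1
      · rw [Finset.prod_congr rfl (fun x hx => hcst_pos x (Finset.mem_filter.1 hx).2),
          Finset.prod_const]
      · rw [Finset.prod_congr rfl (fun x hx => hcst_neg x (Finset.mem_filter.1 hx).2),
          Finset.prod_const]
    have hvb : volume (Metric.ball (0 : Fn n) γ) ≤ ENNReal.ofReal (C1const n p * γ ^ n) := by
      rw [Measure.addHaar_ball_of_pos volume (0 : Fn n) hγ, finrank_euclideanSpace_fin]
      have hb1 : volume (Metric.ball (0 : Fn n) 1) ≤ ENNReal.ofReal (C1const n p) := by
        conv_lhs => rw [← ENNReal.ofReal_toReal measure_ball_lt_top.ne]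
        exact ENNReal.ofReal_le_ofReal (le_max_left _ _)
      calc ENNReal.ofReal (γ ^ n) * volume (Metric.ball (0 : Fn n) 1)
          ≤ ENNReal.ofReal (γ ^ n) * ENNReal.ofReal (C1const n p) :=
            mul_le_mul_right hb1 _
        _ = ENNReal.ofReal (C1const n p * γ ^ n) := by
            rw [← ENNReal.ofReal_mul (by positivity), mul_comm]
    have hJle : J ≤ ENNReal.ofReal (α ^ (-(n : ℝ) / p) * C1const n p) := by
      have hJval : J = ENNReal.ofReal
          (α ^ (-(n : ℝ) / p) * ∫ ζ : Fn n, Real.exp (-‖ζ‖ ^ p)) := J_eq_aux n hp hα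
      rw [hJval]
      apply ENNReal.ofReal_le_ofReal
      exact mul_le_mul_of_nonneg_left (le_max_right _ _) (Real.rpow_nonneg hα.le _)
    have h1nn : (0:ℝ) ≤ C1const n p * γ ^ n := by
      have := C1const_nonneg n p
      positivity
    have h2nn : (0:ℝ) ≤ α ^ (-(n : ℝ) / p) * C1const n p :=
      mul_nonneg (Real.rpow_nonneg hα.le _) (C1const_nonneg n p)
    calc (∏ x, cst x) = _ := hprodsplit
      _ ≤ (ENNReal.ofReal (C1const n p * γ ^ n)) ^
              (Finset.univ.filter (fun x : ↥(latt G O ε) => ρ x = x)).card *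
            (ENNReal.ofReal (α ^ (-(n : ℝ) / p) * C1const n p)) ^
              (Finset.univ.filter (fun x : ↥(latt G O ε) => ¬ ρ x = x)).card :=
          mul_le_mul' (pow_le_pow_left' hvb _) (pow_le_pow_left' hJle _)
      _ = ENNReal.ofReal
          ((C1const n p * γ ^ n) ^ numComponents G (latt G O ε) *
            (α ^ (-(n : ℝ) / p) * C1const n p) ^
              (Nat.card ↥(latt G O ε) - numComponents G (latt G O ε))) := by
          rw [← ENNReal.ofReal_pow h1nn, ← ENNReal.ofReal_pow h2nn,
            ← ENNReal.ofReal_mul (by positivity), hcount, hcardS, hNrcard]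
  -- assemble
  have hRHS_nonneg : 0 ≤ (C1const n p * γ ^ n) ^ numComponents G (latt G O ε) *
      (α ^ (-(n : ℝ) / p) * C1const n p) ^
        (Nat.card ↥(latt G O ε) - numComponents G (latt G O ε)) := by
    have h1 : 0 ≤ C1const n p := C1const_nonneg n p
    have h2 : (0:ℝ) ≤ α ^ (-(n : ℝ) / p) := Real.rpow_nonneg hα.le _
    positivity
  have hgradmeas : Measurable (fun u : ↥(latt G O ε) → Fn n => gradLpNormP G O ε p u) := by
    have hg : (fun u : ↥(latt G O ε) → Fn n => gradLpNormP G O ε p u) =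
        fun u => ∑ e : edgesIn G (latt G O ε),
          ‖u ⟨e.val.1, e.prop.2.1⟩ - u ⟨e.val.2, e.prop.2.2⟩‖ ^ p := by
      funext u
      exact tsum_fintype _
    rw [hg]
    apply Finset.measurable_sum
    intro e _
    have h0 : Measurable fun u : ↥(latt G O ε) → Fn n =>
        u ⟨e.val.1, e.prop.2.1⟩ - u ⟨e.val.2, e.prop.2.2⟩ :=
      (measurable_pi_apply _).sub (measurable_pi_apply _)
    have h1 : Measurable fun u : ↥(latt G O ε) → Fn n =>
        ‖u ⟨e.val.1, e.prop.2.1⟩ - u ⟨e.val.2, e.prop.2.2⟩‖ := h0.norm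
    exact (Real.continuous_rpow_const hp0.le).measurable.comp h1
  have hmeas_f : Measurable (fun u : ↥(latt G O ε) → Fn n =>
      Real.exp (-α * gradLpNormP G O ε p u)) :=
    Real.measurable_exp.comp (hgradmeas.const_mul (-α))
  have hpi : piIntegral n (latt G O ε) V (fun u => Real.exp (-α * gradLpNormP G O ε p u)) =
      ∫ u in V, Real.exp (-α * gradLpNormP G O ε p u)
        ∂(Measure.pi fun _ : ↥(latt G O ε) => (volume : Measure (Fn n))) := by
    simp only [piIntegral]
    rw [dif_pos hfin]
  rw [hpi]
  have heq2 : (∫ u in V, Real.exp (-α * gradLpNormP G O ε p u)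
      ∂(Measure.pi fun _ : ↥(latt G O ε) => (volume : Measure (Fn n)))) =
      (∫⁻ u in V, ENNReal.ofReal (Real.exp (-α * gradLpNormP G O ε p u))
        ∂(Measure.pi fun _ : ↥(latt G O ε) => (volume : Measure (Fn n)))).toReal :=
    integral_eq_lintegral_of_nonneg_ae (Eventually.of_forall fun u => (Real.exp_pos _).le)
      hmeas_f.aestronglyMeasurable
  rw [heq2]
  have hchain2 : (∫⁻ u in V, ENNReal.ofReal (Real.exp (-α * gradLpNormP G O ε p u))
      ∂(Measure.pi fun _ : ↥(latt G O ε) => (volume : Measure (Fn n)))) ≤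
      ENNReal.ofReal
        ((C1const n p * γ ^ n) ^ numComponents G (latt G O ε) *
          (α ^ (-(n : ℝ) / p) * C1const n p) ^
            (Nat.card ↥(latt G O ε) - numComponents G (latt G O ε))) := by
    calc (∫⁻ u in V, ENNReal.ofReal (Real.exp (-α * gradLpNormP G O ε p u))
        ∂(Measure.pi fun _ : ↥(latt G O ε) => (volume : Measure (Fn n))))
        ≤ ∫⁻ u in V, ∏ x, Gfac x u
            ∂(Measure.pi fun _ : ↥(latt G O ε) => (volume : Measure (Fn n))) :=
          setLIntegral_mono (Finset.measurable_prod _ fun i _ => hGmeas i) hptw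
      _ ≤ ∫⁻ u, ∏ x, Gfac x u
            ∂(Measure.pi fun _ : ↥(latt G O ε) => (volume : Measure (Fn n))) :=
          setLIntegral_le_lintegral _ _
      _ = ∏ x, cst x := hcore
      _ ≤ _ := hfinal
  calc (∫⁻ u in V, ENNReal.ofReal (Real.exp (-α * gradLpNormP G O ε p u))
      ∂(Measure.pi fun _ : ↥(latt G O ε) => (volume : Measure (Fn n)))).toReal
      ≤ (ENNReal.ofReal
        ((C1const n p * γ ^ n) ^ numComponents G (latt G O ε) *
          (α ^ (-(n : ℝ) / p) * C1const n p) ^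
            (Nat.card ↥(latt G O ε) - numComponents G (latt G O ε)))).toReal :=
        ENNReal.toReal_mono ENNReal.ofReal_ne_top hchain2
    _ = _ := ENNReal.toReal_ofReal hRHS_nonneg


end Polymer
end
end
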